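/- arXiv:2102.00199 — 6 statements merged into one kernel-verified Lean document; each statement's English description precedes it below -/
import Mathlib

section
/- Let p and q be probability densities with respect to a dominating σ-finite measure μ. Then (1/4) ∫ (p(x) − q(x))² / (p(x) + q(x)) dμ ≤ JS(p,q) ≤ (log 2 / 2) ∫ (p(x) − q(x))² / (p(x) + q(x)) dμ, where the integrand is taken to be 0 wherever p(x) + q(x) = 0. -/
open MeasureTheory

open Filter

lemma hasSum_c : HasSum (fun k : ℕ => 1 / ((2*(k:ℝ)+1)*((k:ℝ)+1))) (2 * Real.log 2) := by
  rw [hasSum_iff_tendsto_nat_of_nonneg (fun k => by positivity)]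
  have hsum : ∀ n : ℕ, ∑ i ∈ Finset.range n, 1 / ((2*(i:ℝ)+1)*((i:ℝ)+1))
      = 2 * ((harmonic (2*n) : ℝ) - (harmonic n : ℝ)) := by
    intro n
    induction n with
    | zero => simp
    | succ n ih =>
      rw [Finset.sum_range_succ, ih]
      have h1 : 2*(n+1) = (2*n+1)+1 := by ring
      rw [h1, harmonic_succ, harmonic_succ, harmonic_succ]
      push_cast
      have h2 : (2*(n:ℝ)+1) ≠ 0 := by positivity
      have h3 : ((n:ℝ)+1) ≠ 0 := by positivity
      have h4 : (2*(n:ℝ)+1+1) ≠ 0 := by positivity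
      field_simp
      ring
  have h2n : Tendsto (fun n : ℕ => 2*n) atTop atTop :=
    tendsto_atTop_mono (fun n => by simp only [id_eq]; omega) tendsto_id
  have hA := Real.tendsto_harmonic_sub_log.comp h2n
  simp only [Function.comp_def] at hA
  have hT := ((hA.sub Real.tendsto_harmonic_sub_log).add
      (tendsto_const_nhds (x := Real.log 2))).const_mul (2:ℝ)
  have hval : (2:ℝ) * (Real.eulerMascheroniConstant - Real.eulerMascheroniConstant + Real.log 2)
      = 2 * Real.log 2 := by ring
  rw [hval] at hT
  apply hT.congr'
  filter_upwards [eventually_ge_atTop 1] with n hn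
  rw [hsum n]
  have hn' : ((n:ℝ)) ≠ 0 := by
    exact Nat.cast_ne_zero.mpr (by omega)
  have : Real.log ((2*n : ℕ) : ℝ) = Real.log 2 + Real.log n := by
    push_cast
    rw [Real.log_mul two_ne_zero hn']
  rw [this]
  ring


lemma hasSum_psi {u : ℝ} (h : |u| < 1) :
    HasSum (fun k : ℕ => (u^2)^(k+1) / ((2*(k:ℝ)+1)*((k:ℝ)+1)))
      ((1+u)*Real.log (1+u) + (1-u)*Real.log (1-u)) := by
  obtain ⟨h1, h2⟩ := abs_lt.mp h
  have hsq : |u^2| < 1 := by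
    rw [abs_of_nonneg (sq_nonneg u)]; nlinarith
  have A := Real.hasSum_pow_div_log_of_abs_lt_one hsq
  have B := (Real.hasSum_log_sub_log_of_abs_lt_one h).mul_left u
  have C := B.sub A
  convert C using 1
  · rfl
  · funext k
    have hk1 : (2*(k:ℝ)+1) ≠ 0 := by positivity
    have hk2 : ((k:ℝ)+1) ≠ 0 := by positivity
    field_simp
    ring
  · have hp : (0:ℝ) < 1 + u := by linarith
    have hm : (0:ℝ) < 1 - u := by linarith
    have e : 1 - u^2 = (1+u)*(1-u) := by ring
    rw [e, Real.log_mul hp.ne' hm.ne']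
    ring

lemma psi_bounds {u : ℝ} (h1 : -1 ≤ u) (h2 : u ≤ 1) :
    u^2 ≤ (1+u)*Real.log (1+u) + (1-u)*Real.log (1-u) ∧
    (1+u)*Real.log (1+u) + (1-u)*Real.log (1-u) ≤ 2*Real.log 2 * u^2 := by
  rcases eq_or_lt_of_le h2 with rfl|h2'
  · norm_num
    nlinarith [Real.log_two_gt_d9]
  rcases eq_or_lt_of_le h1 with h1e|h1'
  · rw [← h1e]
    norm_num
    nlinarith [Real.log_two_gt_d9]
  · have habs : |u| < 1 := abs_lt.mpr ⟨h1', h2'⟩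
    have HS := hasSum_psi habs
    constructor
    · have := le_hasSum HS 0 (fun k _ => by positivity)
      simpa using this
    · have HC := hasSum_c.mul_left (u^2)
      have hle : (1+u)*Real.log (1+u) + (1-u)*Real.log (1-u) ≤ u^2 * (2*Real.log 2) := by
        refine hasSum_le (fun k => ?_) HS HC
        have hu2 : u^2 ≤ 1 := by nlinarith
        have hpow : (u^2)^(k+1) ≤ u^2 := by
          calc (u^2)^(k+1) ≤ (u^2)^1 :=
            pow_le_pow_of_le_one (sq_nonneg u) hu2 (by omega)
          _ = u^2 := pow_one _
        rw [mul_one_div]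
        gcongr
      linarith

lemma F_bounds (a b : ℝ) (ha : 0 ≤ a) (hb : 0 ≤ b) :
    (a - b)/2 ≤ a * Real.log (2*a/(a+b)) ∧ a * Real.log (2*a/(a+b)) ≤ a * Real.log 2 := by
  rcases eq_or_lt_of_le ha with h|h
  · rw [← h]
    norm_num
    linarith
  · have hs : 0 < a + b := by linarith
    constructor
    · have h1 : Real.log ((a+b)/(2*a)) ≤ (a+b)/(2*a) - 1 :=
        Real.log_le_sub_one_of_pos (by positivity)
      have h2 : Real.log (2*a/(a+b)) = - Real.log ((a+b)/(2*a)) := by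
        rw [← Real.log_inv]
        congr 1
        field_simp
      have h3 : a * ((a+b)/(2*a) - 1) = (b-a)/2 := by field_simp; ring
      rw [h2, mul_neg]
      nlinarith [mul_le_mul_of_nonneg_left h1 h.le]
    · have harg2 : 2*a/(a+b) ≤ 2 := by rw [div_le_iff₀ hs]; linarith
      exact mul_le_mul_of_nonneg_left (Real.log_le_log (by positivity) harg2) h.le

lemma key (a b : ℝ) (ha : 0 ≤ a) (hb : 0 ≤ b) :
    (1/4) * ((a-b)^2/(a+b)) ≤
      (1/2) * (a * Real.log (2*a/(a+b))) + (1/2) * (b * Real.log (2*b/(a+b))) ∧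
    (1/2) * (a * Real.log (2*a/(a+b))) + (1/2) * (b * Real.log (2*b/(a+b))) ≤
      (Real.log 2/2) * ((a-b)^2/(a+b)) := by
  rcases eq_or_lt_of_le (show (0:ℝ) ≤ a + b by linarith) with hs|hs
  · have ha0 : a = 0 := by linarith
    have hb0 : b = 0 := by linarith
    simp [ha0, hb0]
  · have hu1 : -1 ≤ (a-b)/(a+b) := by rw [le_div_iff₀ hs]; linarith
    have hu2 : (a-b)/(a+b) ≤ 1 := by rw [div_le_one hs]; linarith
    set u := (a-b)/(a+b) with hu
    have e1 : 2*a/(a+b) = 1 + u := by rw [hu]; field_simp; ring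
    have e2 : 2*b/(a+b) = 1 - u := by rw [hu]; field_simp; ring
    have eH : (a-b)^2/(a+b) = (a+b)*u^2 := by rw [hu]; field_simp
    have ea : a = (a+b)*(1+u)/2 := by rw [hu]; field_simp; ring
    have eb : b = (a+b)*(1-u)/2 := by rw [hu]; field_simp; ring
    obtain ⟨L, U⟩ := psi_bounds hu1 hu2
    rw [e1, e2, eH]
    have emid : (1/2) * (a * Real.log (1+u)) + (1/2) * (b * Real.log (1-u))
        = (a+b)/4 * ((1+u)*Real.log (1+u) + (1-u)*Real.log (1-u)) := by
      linear_combination (Real.log (1+u)/2) * ea + (Real.log (1-u)/2) * eb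
    rw [emid]
    have hL := mul_le_mul_of_nonneg_left L (show (0:ℝ) ≤ (a+b)/4 by linarith)
    have hU := mul_le_mul_of_nonneg_left U (show (0:ℝ) ≤ (a+b)/4 by linarith)
    constructor <;> nlinarith [hL, hU]

/-- The Jensen–Shannon divergence between two densities `p, q` (w.r.t. `μ`),
`JS(p,q) = (1/2) KL(p, (p+q)/2) + (1/2) KL(q, (p+q)/2)`.
Since `p, q ≥ 0`, both `p` and `q` are absolutely continuous w.r.t. `(p+q)/2`,
so the KL terms are given by the integrals below (with the conventions
`0 log 0 = 0` and `x/0 = 0`, which are automatic in Lean). -/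
noncomputable def JSdiv {X : Type*} [MeasurableSpace X] (μ : Measure X)
    (p q : X → ℝ) : ℝ :=
  (1 / 2) * ∫ x, p x * Real.log (2 * p x / (p x + q x)) ∂μ
    + (1 / 2) * ∫ x, q x * Real.log (2 * q x / (p x + q x)) ∂μ

/-- For probability densities `p, q` w.r.t. a σ-finite measure `μ`,
`(1/4) ∫ (p-q)²/(p+q) dμ ≤ JS(p,q) ≤ (log 2 / 2) ∫ (p-q)²/(p+q) dμ`,
the integrand being `0` where `p + q = 0` (automatic in Lean since `x/0 = 0`). -/
theorem statement_7 {X : Type*} [MeasurableSpace X] (μ : Measure X) [SigmaFinite μ]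
    (p q : X → ℝ) (hpm : Measurable p) (hqm : Measurable q)
    (hp0 : ∀ x, 0 ≤ p x) (hq0 : ∀ x, 0 ≤ q x)
    (hp1 : ∫ x, p x ∂μ = 1) (hq1 : ∫ x, q x ∂μ = 1)
    (hpi : Integrable p μ) (hqi : Integrable q μ) :
    (1 / 4) * ∫ x, (p x - q x) ^ 2 / (p x + q x) ∂μ ≤ JSdiv μ p q ∧
    JSdiv μ p q ≤ (Real.log 2 / 2) * ∫ x, (p x - q x) ^ 2 / (p x + q x) ∂μ := by
  have hlog2 : (0:ℝ) < Real.log 2 := Real.log_pos one_lt_two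
  have hpq : Integrable (fun x => p x + q x) μ := hpi.add hqi
  have hFm : Measurable fun x => p x * Real.log (2 * p x / (p x + q x)) :=
    hpm.mul (Real.measurable_log.comp ((measurable_const.mul hpm).div (hpm.add hqm)))
  have hGm : Measurable fun x => q x * Real.log (2 * q x / (p x + q x)) :=
    hqm.mul (Real.measurable_log.comp ((measurable_const.mul hqm).div (hpm.add hqm)))
  have hHm : Measurable fun x => (p x - q x) ^ 2 / (p x + q x) :=
    ((hpm.sub hqm).pow_const 2).div (hpm.add hqm)
  have hFi : Integrable (fun x => p x * Real.log (2 * p x / (p x + q x))) μ := by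
    refine (hpq.const_mul (1/2 + Real.log 2)).mono' hFm.aestronglyMeasurable
      (ae_of_all _ fun x => ?_)
    obtain ⟨l, r⟩ := F_bounds (p x) (q x) (hp0 x) (hq0 x)
    rw [Real.norm_eq_abs, abs_le]
    constructor
    · nlinarith [hp0 x, hq0 x, mul_nonneg (hp0 x) hlog2.le, mul_nonneg (hq0 x) hlog2.le]
    · nlinarith [hp0 x, hq0 x, mul_nonneg (hp0 x) hlog2.le, mul_nonneg (hq0 x) hlog2.le]
  have hGi : Integrable (fun x => q x * Real.log (2 * q x / (p x + q x))) μ := by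
    refine (hpq.const_mul (1/2 + Real.log 2)).mono' hGm.aestronglyMeasurable
      (ae_of_all _ fun x => ?_)
    have hFB := F_bounds (q x) (p x) (hq0 x) (hp0 x)
    rw [add_comm (q x) (p x)] at hFB
    obtain ⟨l, r⟩ := hFB
    rw [Real.norm_eq_abs, abs_le]
    constructor
    · nlinarith [hp0 x, hq0 x, mul_nonneg (hp0 x) hlog2.le, mul_nonneg (hq0 x) hlog2.le]
    · nlinarith [hp0 x, hq0 x, mul_nonneg (hp0 x) hlog2.le, mul_nonneg (hq0 x) hlog2.le]
  have hHi : Integrable (fun x => (p x - q x) ^ 2 / (p x + q x)) μ := by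
    refine hpq.mono' hHm.aestronglyMeasurable (ae_of_all _ fun x => ?_)
    have ha := hp0 x; have hb := hq0 x
    rw [Real.norm_eq_abs]
    rcases eq_or_lt_of_le (show (0:ℝ) ≤ p x + q x by linarith) with hs|hs
    · rw [← hs, div_zero, abs_zero]
    · rw [abs_of_nonneg (by positivity), div_le_iff₀ hs]
      nlinarith
  have hmid : JSdiv μ p q = ∫ x, ((1/2) * (p x * Real.log (2 * p x / (p x + q x)))
      + (1/2) * (q x * Real.log (2 * q x / (p x + q x)))) ∂μ := by
    unfold JSdiv
    rw [integral_add (hFi.const_mul _) (hGi.const_mul _), integral_const_mul _ _,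
      integral_const_mul _ _]
  constructor
  · rw [hmid, ← integral_const_mul _ _]
    exact integral_mono (hHi.const_mul _) ((hFi.const_mul _).add (hGi.const_mul _))
      fun x => (key (p x) (q x) (hp0 x) (hq0 x)).1
  · rw [hmid, ← integral_const_mul _ _]
    exact integral_mono ((hFi.const_mul _).add (hGi.const_mul _)) (hHi.const_mul _)
      fun x => (key (p x) (q x) (hp0 x) (hq0 x)).2
end

section
/- Suppose Assumption (Ap) holds and μ(X) ≤ 1. Then for any u, v ∈ W: | sqrt(JS(p_u, p*)) − sqrt(JS(p_v, p*)) | ≤ (sqrt(L_p log 2) / 2^{1/4}) · ‖u − v‖_∞^{1/4} < sqrt(L_p) · ‖u − v‖_∞^{1/4}. -/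
open MeasureTheory

open Real Filter Set Topology


noncomputable def psiJS (a b : ℝ) : ℝ :=
  (1/2) * (a * Real.log (2*a/(a+b))) + (1/2) * (b * Real.log (2*b/(a+b)))

noncomputable def Jker (a b t : ℝ) : ℝ :=
  t*(a-b)^2/(2*((a+t)*((b+t)*(a+b+2*t))))

noncomputable def FJ (a b t : ℝ) : ℝ :=
  (a+b)/2 * Real.log ((a+b)/2 + t) - a/2 * Real.log (a+t) - b/2 * Real.log (b+t)

lemma psiJS_symm (a b : ℝ) : psiJS a b = psiJS b a := by
  unfold psiJS
  rw [add_comm b a]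
  ring

lemma Jker_nonneg {a b t : ℝ} (ha : 0 ≤ a) (hb : 0 ≤ b) (ht : 0 < t) :
    0 ≤ Jker a b t := by
  unfold Jker
  positivity

lemma hasDerivAt_FJ {a b : ℝ} (ha : 0 ≤ a) (hb : 0 ≤ b) {t : ℝ} (ht : 0 < t) :
    HasDerivAt (FJ a b) (Jker a b t) t := by
  have hm : 0 < (a+b)/2 + t := by linarith
  have hat : 0 < a + t := by linarith
  have hbt : 0 < b + t := by linarith
  have h1 : HasDerivAt (fun t : ℝ => Real.log ((a+b)/2 + t)) (1/((a+b)/2+t)) t := by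
    simpa using ((hasDerivAt_id t).const_add ((a+b)/2)).log hm.ne'
  have h2 : HasDerivAt (fun t : ℝ => Real.log (a + t)) (1/(a+t)) t := by
    simpa using ((hasDerivAt_id t).const_add a).log hat.ne'
  have h3 : HasDerivAt (fun t : ℝ => Real.log (b + t)) (1/(b+t)) t := by
    simpa using ((hasDerivAt_id t).const_add b).log hbt.ne'
  have h := ((h1.const_mul ((a+b)/2)).sub (h2.const_mul (a/2))).sub (h3.const_mul (b/2))
  refine h.congr_deriv ?_
  unfold Jker
  field_simp
  ring

lemma cwa_term {c k : ℝ} (hk : 0 ≤ k) (hck : k = 0 → c = 0) :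
    ContinuousWithinAt (fun t : ℝ => c * Real.log (k + t)) (Ici 0) 0 := by
  rcases eq_or_lt_of_le hk with h0 | hpos
  · have : (fun t : ℝ => c * Real.log (k + t)) = fun _ => 0 := by
      funext t; rw [hck h0.symm, zero_mul]
    rw [this]; exact continuousWithinAt_const
  · apply ContinuousAt.continuousWithinAt
    have h1 : ContinuousAt (fun t : ℝ => Real.log (k + t)) 0 :=
      (Real.continuousAt_log (by simpa using hpos.ne')).comp (by fun_prop)
    exact continuousAt_const.mul h1

lemma FJ_cwa {a b : ℝ} (ha : 0 ≤ a) (hb : 0 ≤ b) :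
    ContinuousWithinAt (FJ a b) (Ici 0) 0 := by
  unfold FJ
  exact ((cwa_term (by linarith) (fun h => h)).sub
    (cwa_term ha (fun h => by rw [h]; ring))).sub
    (cwa_term hb (fun h => by rw [h]; ring))

lemma tendsto_log_ratio {k m : ℝ} (hk : 0 ≤ k) (hm : 0 ≤ m) :
    Tendsto (fun t : ℝ => Real.log (m + t) - Real.log (k + t)) atTop (𝓝 0) := by
  have hden : Tendsto (fun t : ℝ => k + t) atTop atTop :=
    tendsto_atTop_add_const_left atTop k tendsto_id
  have h0 : Tendsto (fun t : ℝ => (m - k) * (k + t)⁻¹) atTop (𝓝 ((m-k) * 0)) :=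
    (tendsto_inv_atTop_zero.comp hden).const_mul (m - k)
  have h1 : Tendsto (fun t : ℝ => 1 + (m - k) * (k + t)⁻¹) atTop (𝓝 1) := by
    simpa using h0.const_add 1
  have h2 : Tendsto (fun t : ℝ => Real.log (1 + (m - k) * (k + t)⁻¹)) atTop (𝓝 0) := by
    have := (Real.continuousAt_log one_ne_zero).tendsto.comp h1
    simpa [Function.comp_def] using this
  apply h2.congr'
  filter_upwards [eventually_gt_atTop 0] with t ht
  have hkt : (0:ℝ) < k + t := by linarith
  have hmt : (0:ℝ) < m + t := by linarith
  have : 1 + (m - k) * (k + t)⁻¹ = (m + t) / (k + t) := by field_simp; ring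
  rw [this, Real.log_div hmt.ne' hkt.ne']

lemma FJ_tendsto {a b : ℝ} (ha : 0 ≤ a) (hb : 0 ≤ b) :
    Tendsto (FJ a b) atTop (𝓝 0) := by
  have h : FJ a b = fun t => a/2 * (Real.log ((a+b)/2 + t) - Real.log (a+t))
      + b/2 * (Real.log ((a+b)/2 + t) - Real.log (b+t)) := by
    funext t; unfold FJ; ring
  rw [h]
  have hm : (0:ℝ) ≤ (a+b)/2 := by linarith
  have := ((tendsto_log_ratio ha hm).const_mul (a/2)).add
    ((tendsto_log_ratio hb hm).const_mul (b/2))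
  simpa using this

lemma FJ_zero {a b : ℝ} (ha : 0 ≤ a) (hb : 0 ≤ b) : FJ a b 0 = - psiJS a b := by
  unfold FJ psiJS
  rcases eq_or_lt_of_le ha with ha0 | hapos
  · rcases eq_or_lt_of_le hb with hb0 | hbpos
    · simp [← ha0, ← hb0]
    · rw [← ha0]
      have h2b : 2*b/(0+b) = 2 := by field_simp; ring
      have : (0+b)/2 = b/2 := by ring
      rw [this, h2b, show b/2 + 0 = b/2 by ring, show b + (0:ℝ) = b by ring,
        Real.log_div hbpos.ne' two_ne_zero]
      simp
      ring
  · rcases eq_or_lt_of_le hb with hb0 | hbpos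
    · rw [← hb0]
      have h2a : 2*a/(a+0) = 2 := by field_simp; ring
      have : (a+0)/2 = a/2 := by ring
      rw [this, h2a, show a/2 + 0 = a/2 by ring, show a + (0:ℝ) = a by ring,
        Real.log_div hapos.ne' two_ne_zero]
      simp
      ring
    · have hs : (0:ℝ) < a + b := by linarith
      rw [show (a+b)/2 + 0 = (a+b)/2 by ring, show a + 0 = a by ring, show b + 0 = b by ring]
      rw [Real.log_div (by positivity) hs.ne', Real.log_div (by positivity) hs.ne',
        Real.log_mul two_ne_zero hapos.ne', Real.log_mul two_ne_zero hbpos.ne',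
        Real.log_div hs.ne' two_ne_zero]
      ring

lemma Jker_integral {a b : ℝ} (ha : 0 ≤ a) (hb : 0 ≤ b) :
    ∫ t in Ioi (0:ℝ), Jker a b t = psiJS a b := by
  have := integral_Ioi_of_hasDerivAt_of_nonneg (FJ_cwa ha hb)
    (fun t ht => hasDerivAt_FJ ha hb ht) (fun t ht => Jker_nonneg ha hb ht)
    (FJ_tendsto ha hb)
  rw [this, FJ_zero ha hb]; ring

lemma Jker_integrableOn {a b : ℝ} (ha : 0 ≤ a) (hb : 0 ≤ b) :
    IntegrableOn (Jker a b) (Ioi 0) := by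
  exact integrableOn_Ioi_deriv_of_nonneg (FJ_cwa ha hb)
    (fun t ht => hasDerivAt_FJ ha hb ht) (fun t ht => Jker_nonneg ha hb ht)
    (FJ_tendsto ha hb)

lemma psiJS_nonneg {a b : ℝ} (ha : 0 ≤ a) (hb : 0 ≤ b) : 0 ≤ psiJS a b := by
  rw [← Jker_integral ha hb]
  exact setIntegral_nonneg measurableSet_Ioi (fun t ht => Jker_nonneg ha hb ht)

-- key comparison step for a ≤ b
lemma psiJS_le_aux {a b : ℝ} (ha : 0 ≤ a) (hab : a ≤ b) :
    psiJS a b ≤ Real.log 2 / 2 * (b - a) := by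
  have hb : 0 ≤ b := le_trans ha hab
  have hd : 0 ≤ b - a := by linarith
  -- psi(0, d) = log 2/2 * d
  have hpsi0 : psiJS 0 (b-a) = Real.log 2 / 2 * (b-a) := by
    unfold psiJS
    rcases eq_or_lt_of_le hd with h0 | hdpos
    · simp [← h0]
    · rw [show 2*(b-a)/(0+(b-a)) = 2 by field_simp; ring]
      simp; ring
  rw [← hpsi0, ← Jker_integral ha hb, ← Jker_integral le_rfl hd]
  apply setIntegral_mono_on (Jker_integrableOn ha hb) (Jker_integrableOn le_rfl hd)
    measurableSet_Ioi
  intro t ht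
  have ht' : (0:ℝ) < t := ht
  unfold Jker
  rw [show (a - b)^2 = (b-a)^2 by ring, show (0 - (b-a))^2 = (b-a)^2 by ring]
  apply div_le_div_of_nonneg_left (by positivity) (by positivity)
  · have hb0 : 0 ≤ b := le_trans ha hab
    nlinarith [mul_nonneg ha (mul_pos ht' ht').le, mul_nonneg (mul_nonneg ha hb0) ht'.le,
      mul_nonneg (mul_nonneg ha hb0) (add_nonneg ha hb0)]

lemma psiJS_le {a b : ℝ} (ha : 0 ≤ a) (hb : 0 ≤ b) :
    psiJS a b ≤ Real.log 2 / 2 * |a - b| := by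
  -- wlog a ≤ b
  rcases le_total a b with hab | hab
  · rw [abs_of_nonpos (by linarith)]
    simpa using psiJS_le_aux ha hab
  · rw [abs_of_nonneg (by linarith), psiJS_symm]
    exact psiJS_le_aux hb hab


lemma mid_ineq {A B C : ℝ} (hA : 0 < A) (hB : 0 < B) (hC : 0 < C)
    (hAC : A ≤ C) (hCB : C ≤ B) :
    (B^2-A^2)/C ≤ (B^2-C^2)/A + (C^2-A^2)/B := by
  rw [div_add_div _ _ hA.ne' hB.ne', div_le_div_iff₀ hC (by positivity)]
  have hid : (((B^2-C^2)*B + (C^2-A^2)*A)*C - (B^2-A^2)*(A*B))*((A+C)*(B+C))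
      = (B^2-C^2)*(C^2-A^2)*(B-A)*(A+B+C) := by ring
  have hcert : 0 ≤ (B^2-C^2)*(C^2-A^2)*(B-A)*(A+B+C) := by
    have h1 : 0 ≤ B^2-C^2 := by nlinarith
    have h2 : 0 ≤ C^2-A^2 := by nlinarith
    have h3 : 0 ≤ B-A := by linarith
    positivity
  nlinarith [mul_pos (add_pos hA hC) (add_pos hB hC)]

lemma sigma_tri_aux {p q r : ℝ} (hp : 0 < p) (hq : 0 < q) (hr : 0 < r) (hpr : p ≤ r) :
    Real.sqrt ((p-r)^2/(p+r)) ≤ Real.sqrt ((p-q)^2/(p+q)) + Real.sqrt ((q-r)^2/(q+r)) := by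
  have e1 : Real.sqrt ((p-r)^2/(p+r)) = (r-p)/Real.sqrt (p+r) := by
    rw [Real.sqrt_div (sq_nonneg _), Real.sqrt_sq_eq_abs, abs_of_nonpos (by linarith)]
    ring_nf
  rcases le_total q p with hqp | hpq
  · -- q ≤ p ≤ r : second term alone suffices
    apply le_add_of_nonneg_of_le (Real.sqrt_nonneg _)
    apply Real.sqrt_le_sqrt
    exact div_le_div₀ (sq_nonneg _) (by nlinarith) (by linarith) (by linarith)
  · rcases le_total q r with hqr | hrq
    · -- p ≤ q ≤ r : main case
      have e2 : Real.sqrt ((p-q)^2/(p+q)) = (q-p)/Real.sqrt (p+q) := by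
        rw [Real.sqrt_div (sq_nonneg _), Real.sqrt_sq_eq_abs, abs_of_nonpos (by linarith)]
        ring_nf
      have e3 : Real.sqrt ((q-r)^2/(q+r)) = (r-q)/Real.sqrt (q+r) := by
        rw [Real.sqrt_div (sq_nonneg _), Real.sqrt_sq_eq_abs, abs_of_nonpos (by linarith)]
        ring_nf
      rw [e1, e2, e3]
      set A := Real.sqrt (p+q) with hA
      set B := Real.sqrt (q+r) with hB
      set C := Real.sqrt (p+r) with hC
      have hA2 : A^2 = p+q := Real.sq_sqrt (by linarith)
      have hB2 : B^2 = q+r := Real.sq_sqrt (by linarith)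
      have hC2 : C^2 = p+r := Real.sq_sqrt (by linarith)
      have hA0 : 0 < A := Real.sqrt_pos.mpr (by linarith)
      have hB0 : 0 < B := Real.sqrt_pos.mpr (by linarith)
      have hC0 : 0 < C := Real.sqrt_pos.mpr (by linarith)
      have hACle : A ≤ C := Real.sqrt_le_sqrt (by linarith)
      have hCBle : C ≤ B := Real.sqrt_le_sqrt (by linarith)
      have := mid_ineq hA0 hB0 hC0 hACle hCBle
      rw [hA2, hB2, hC2] at this
      calc (r-p)/C = (q+r-(p+q))/C := by ring_nf
        _ ≤ (q+r-(p+r))/A + (p+r-(p+q))/B := this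
        _ = (q-p)/A + (r-q)/B := by ring_nf
    · -- p ≤ r ≤ q : first term alone suffices
      apply le_add_of_le_of_nonneg ?_ (Real.sqrt_nonneg _)
      apply Real.sqrt_le_sqrt
      rw [div_le_div_iff₀ (by linarith) (by linarith)]
      nlinarith [mul_nonneg (mul_nonneg (sub_nonneg.mpr hrq) (sub_nonneg.mpr hpr))
          (by linarith : (0:ℝ) ≤ 3*p+r),
        mul_nonneg (mul_nonneg (sub_nonneg.mpr hrq) (sub_nonneg.mpr hrq))
          (by linarith : (0:ℝ) ≤ p+r)]

lemma sigma_tri {p q r : ℝ} (hp : 0 < p) (hq : 0 < q) (hr : 0 < r) :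
    Real.sqrt ((p-r)^2/(p+r)) ≤ Real.sqrt ((p-q)^2/(p+q)) + Real.sqrt ((q-r)^2/(q+r)) := by
  rcases le_total p r with hpr | hrp
  · exact sigma_tri_aux hp hq hr hpr
  · have := sigma_tri_aux hr hq hp hrp
    rw [show (r-p)^2 = (p-r)^2 by ring, show r+p = p+r by ring,
      show (r-q)^2 = (q-r)^2 by ring, show r+q = q+r by ring,
      show (q-p)^2 = (p-q)^2 by ring, show q+p = p+q by ring] at this
    linarith

lemma Jker_eq_sigma {a b t : ℝ} (ha : 0 ≤ a) (hb : 0 ≤ b) (ht : 0 < t) :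
    Jker a b t = (t/2) * (((a+t)⁻¹-(b+t)⁻¹)^2/((a+t)⁻¹+(b+t)⁻¹)) := by
  have h1 : (0:ℝ) < a + t := by linarith
  have h2 : (0:ℝ) < b + t := by linarith
  unfold Jker
  field_simp
  ring

lemma sqrt_Jker_tri {a b c t : ℝ} (ha : 0 ≤ a) (hb : 0 ≤ b) (hc : 0 ≤ c) (ht : 0 < t) :
    Real.sqrt (Jker a c t) ≤ Real.sqrt (Jker a b t) + Real.sqrt (Jker b c t) := by
  have h1 : (0:ℝ) < a + t := by linarith
  have h2 : (0:ℝ) < b + t := by linarith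
  have h3 : (0:ℝ) < c + t := by linarith
  rw [Jker_eq_sigma ha hc ht, Jker_eq_sigma ha hb ht, Jker_eq_sigma hb hc ht,
    Real.sqrt_mul (by positivity), Real.sqrt_mul (by positivity),
    Real.sqrt_mul (by positivity), ← mul_add]
  apply mul_le_mul_of_nonneg_left _ (Real.sqrt_nonneg _)
  exact sigma_tri (by positivity) (by positivity) (by positivity)

lemma sqrt_int_tri {α : Type*} [MeasurableSpace α] {ν : Measure α} {f g h : α → ℝ}
    (hfm : AEStronglyMeasurable f ν) (hgm : AEStronglyMeasurable g ν)
    (hf0 : 0 ≤ᵐ[ν] f) (hg0 : 0 ≤ᵐ[ν] g) (hh0 : 0 ≤ᵐ[ν] h)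
    (hf2 : Integrable (fun x => f x ^ 2) ν) (hg2 : Integrable (fun x => g x ^ 2) ν)
    (hle : ∀ᵐ x ∂ν, h x ≤ f x + g x) :
    Real.sqrt (∫ x, h x ^ 2 ∂ν) ≤
      Real.sqrt (∫ x, f x ^ 2 ∂ν) + Real.sqrt (∫ x, g x ^ 2 ∂ν) := by
  have hfg : Integrable (fun x => f x * g x) ν := by
    refine (hf2.add hg2).mono (hfm.mul hgm) ?_
    filter_upwards with x
    have h1 : |f x * g x| ≤ f x ^ 2 + g x ^ 2 := by nlinarith [sq_nonneg (|f x| - |g x|), abs_mul (f x) (g x), sq_abs (f x), sq_abs (g x), abs_nonneg (f x * g x)]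
    calc ‖f x * g x‖ = |f x * g x| := rfl
      _ ≤ f x ^ 2 + g x ^ 2 := h1
      _ ≤ ‖f x ^ 2 + g x ^ 2‖ := le_abs_self _
  have hfg2 : Integrable (fun x => (f x + g x)^2) ν := by
    have : (fun x => (f x + g x)^2) = fun x => f x^2 + 2*(f x * g x) + g x^2 := by
      funext x; ring
    rw [this]
    exact (hf2.add (hfg.const_mul 2)).add hg2
  have key1 : ∫ x, h x ^2 ∂ν ≤ ∫ x, (f x + g x)^2 ∂ν := by
    apply integral_mono_of_nonneg (by filter_upwards with x; positivity) hfg2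
    filter_upwards [hle, hh0, hf0, hg0] with x h1 h2 h3 h4
    simp only [Pi.zero_apply] at h2 h3 h4
    nlinarith
  -- Cauchy-Schwarz
  have hconj : Real.HolderConjugate 2 2 := Real.HolderConjugate.two_two
  have hf2' : MemLp f (ENNReal.ofReal 2) ν := by
    rw [show ENNReal.ofReal 2 = 2 by simp]
    exact (memLp_two_iff_integrable_sq hfm).mpr hf2
  have hg2' : MemLp g (ENNReal.ofReal 2) ν := by
    rw [show ENNReal.ofReal 2 = 2 by simp]
    exact (memLp_two_iff_integrable_sq hgm).mpr hg2
  have hCS := integral_mul_le_Lp_mul_Lq_of_nonneg hconj hf0 hg0 hf2' hg2'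
  have hrw : ∀ (F : α → ℝ), (∫ x, F x ^ (2:ℝ) ∂ν) ^ ((1:ℝ)/2) = Real.sqrt (∫ x, F x ^2 ∂ν) := by
    intro F
    rw [Real.sqrt_eq_rpow]
    have e : (fun x => F x ^ (2:ℝ)) = (fun x => F x ^ (2:ℕ)) := by
      funext x
      rw [show (2:ℝ) = ((2:ℕ):ℝ) by norm_num, Real.rpow_natCast]
    rw [show (∫ x, F x ^ (2:ℝ) ∂ν) = ∫ x, F x ^ (2:ℕ) ∂ν by rw [e]]
  rw [hrw f, hrw g] at hCS
  have hIf : 0 ≤ ∫ x, f x ^2 ∂ν := integral_nonneg (fun x => sq_nonneg _)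
  have hIg : 0 ≤ ∫ x, g x ^2 ∂ν := integral_nonneg (fun x => sq_nonneg _)
  have key2 : ∫ x, (f x + g x)^2 ∂ν
      ≤ (Real.sqrt (∫ x, f x ^2 ∂ν) + Real.sqrt (∫ x, g x ^2 ∂ν))^2 := by
    have expand : ∫ x, (f x + g x)^2 ∂ν
        = (∫ x, f x^2 ∂ν) + 2*(∫ x, f x * g x ∂ν) + (∫ x, g x^2 ∂ν) := by
      have e2 : ∫ x, (f x + g x)^2 ∂ν = ∫ x, (f x^2 + 2*(f x*g x) + g x^2) ∂ν := by
        apply integral_congr_ae; filter_upwards with x; ring_nf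
      have i1 : Integrable (fun x => f x^2 + 2*(f x*g x)) ν := hf2.add (hfg.const_mul 2)
      rw [e2, integral_add i1 hg2, integral_add hf2 (hfg.const_mul 2), MeasureTheory.integral_const_mul]
    rw [expand]
    have sqf := Real.sq_sqrt hIf
    have sqg := Real.sq_sqrt hIg
    nlinarith [hCS]
  calc Real.sqrt (∫ x, h x ^ 2 ∂ν) ≤ Real.sqrt ((Real.sqrt (∫ x, f x ^2 ∂ν) + Real.sqrt (∫ x, g x ^2 ∂ν))^2) :=
        Real.sqrt_le_sqrt (key1.trans key2)
    _ = Real.sqrt (∫ x, f x ^2 ∂ν) + Real.sqrt (∫ x, g x ^2 ∂ν) := by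
        rw [Real.sqrt_sq (by positivity)]

lemma Jker_measurable (a b : ℝ) : Measurable (Jker a b) := by
  unfold Jker; fun_prop

lemma sq_sqrt_Jker {a b : ℝ} (ha : 0 ≤ a) (hb : 0 ≤ b) :
    ∫ t in Ioi (0:ℝ), Real.sqrt (Jker a b t) ^ 2 = psiJS a b := by
  rw [← Jker_integral ha hb]
  apply integral_congr_ae
  filter_upwards [ae_restrict_mem measurableSet_Ioi] with t ht
  exact Real.sq_sqrt (Jker_nonneg ha hb ht)

lemma sqJ_integrable {a b : ℝ} (ha : 0 ≤ a) (hb : 0 ≤ b) :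
    Integrable (fun t => Real.sqrt (Jker a b t) ^ 2) (volume.restrict (Ioi 0)) := by
  apply (Jker_integrableOn ha hb).congr
  filter_upwards [ae_restrict_mem measurableSet_Ioi] with t ht
  exact (Real.sq_sqrt (Jker_nonneg ha hb ht)).symm

lemma psiJS_sqrt_tri {a b c : ℝ} (ha : 0 ≤ a) (hb : 0 ≤ b) (hc : 0 ≤ c) :
    Real.sqrt (psiJS a c) ≤ Real.sqrt (psiJS a b) + Real.sqrt (psiJS b c) := by
  rw [← sq_sqrt_Jker ha hc, ← sq_sqrt_Jker ha hb, ← sq_sqrt_Jker hb hc]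
  apply sqrt_int_tri
  · exact ((Jker_measurable a b).sqrt).aestronglyMeasurable
  · exact ((Jker_measurable b c).sqrt).aestronglyMeasurable
  · filter_upwards with t; exact Real.sqrt_nonneg _
  · filter_upwards with t; exact Real.sqrt_nonneg _
  · filter_upwards with t; exact Real.sqrt_nonneg _
  · exact sqJ_integrable ha hb
  · exact sqJ_integrable hb hc
  · filter_upwards [ae_restrict_mem measurableSet_Ioi] with t ht
    exact sqrt_Jker_tri ha hb hc ht

lemma term_abs_le {a b : ℝ} (ha : 0 ≤ a) (hb : 0 ≤ b) :
    |a * Real.log (2*a/(a+b))| ≤ a + b := by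
  rcases eq_or_lt_of_le ha with ha0 | hapos
  · rw [← ha0]
    simpa using hb
  · have hs : 0 < a + b := by linarith
    have harg : 0 < 2*a/(a+b) := by positivity
    rw [abs_le]
    constructor
    · have hlog : Real.log ((a+b)/(2*a)) ≤ (a+b)/(2*a) - 1 :=
        Real.log_le_sub_one_of_pos (by positivity)
      have hneg : Real.log (2*a/(a+b)) = - Real.log ((a+b)/(2*a)) := by
        rw [← Real.log_inv]
        congr 1
        field_simp
      rw [hneg]
      have h2 : a * Real.log ((a+b)/(2*a)) ≤ a * ((a+b)/(2*a) - 1) :=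
        mul_le_mul_of_nonneg_left hlog ha
      have h3 : a * ((a+b)/(2*a) - 1) = (a+b)/2 - a := by field_simp
      nlinarith
    · have h1 : Real.log (2*a/(a+b)) ≤ Real.log 2 := by
        apply Real.log_le_log harg
        rw [div_le_iff₀ hs]
        linarith
      have hl2 : Real.log 2 ≤ 1 := by
        have := Real.log_two_lt_d9
        linarith
      nlinarith [mul_le_mul_of_nonneg_left h1 ha, mul_le_mul_of_nonneg_left hl2 ha]

lemma term_integrable {X : Type*} [MeasurableSpace X] {μ : Measure X} {p q : X → ℝ}
    (hp : Integrable p μ) (hq : Integrable q μ) (hpm : Measurable p) (hqm : Measurable q)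
    (hp0 : ∀ x, 0 ≤ p x) (hq0 : ∀ x, 0 ≤ q x) :
    Integrable (fun x => p x * Real.log (2 * p x / (p x + q x))) μ := by
  apply (hp.add hq).mono
  · apply Measurable.aestronglyMeasurable
    exact hpm.mul (Real.measurable_log.comp
      ((measurable_const.mul hpm).div (hpm.add hqm)))
  · filter_upwards with x
    have h := term_abs_le (hp0 x) (hq0 x)
    have h2 : (0:ℝ) ≤ p x + q x := by have := hp0 x; have := hq0 x; linarith
    calc ‖p x * Real.log (2 * p x / (p x + q x))‖ = |p x * Real.log (2*p x/(p x + q x))| := rfl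
      _ ≤ p x + q x := h
      _ ≤ ‖p x + q x‖ := le_abs_self _

lemma JSdiv_eq {X : Type*} [MeasurableSpace X] {μ : Measure X} {p q : X → ℝ}
    (h1 : Integrable (fun x => p x * Real.log (2*p x/(p x+q x))) μ)
    (h2 : Integrable (fun x => q x * Real.log (2*q x/(p x+q x))) μ) :
    JSdiv μ p q = ∫ x, psiJS (p x) (q x) ∂μ := by
  unfold JSdiv psiJS
  rw [← MeasureTheory.integral_const_mul, ← MeasureTheory.integral_const_mul,
    ← integral_add (h1.const_mul _) (h2.const_mul _)]

lemma psi_comp_integrable {X : Type*} [MeasurableSpace X] {μ : Measure X} {p q : X → ℝ}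
    (h1 : Integrable (fun x => p x * Real.log (2*p x/(p x+q x))) μ)
    (h2 : Integrable (fun x => q x * Real.log (2*q x/(p x+q x))) μ) :
    Integrable (fun x => psiJS (p x) (q x)) μ :=
  (h1.const_mul (1/2)).add (h2.const_mul (1/2))

lemma psi_comp_measurable {X : Type*} [MeasurableSpace X] {p q : X → ℝ}
    (hpm : Measurable p) (hqm : Measurable q) :
    Measurable (fun x => psiJS (p x) (q x)) := by
  unfold psiJS
  have m1 : Measurable (fun x => p x * Real.log (2*p x/(p x+q x))) :=
    hpm.mul (Real.measurable_log.comp ((measurable_const.mul hpm).div (hpm.add hqm)))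
  have m2 : Measurable (fun x => q x * Real.log (2*q x/(p x+q x))) :=
    hqm.mul (Real.measurable_log.comp ((measurable_const.mul hqm).div (hpm.add hqm)))
  exact (m1.const_mul _).add (m2.const_mul _)

lemma JS_sqrt_tri {X : Type*} [MeasurableSpace X] {μ : Measure X} {p q r : X → ℝ}
    (hpm : Measurable p) (hqm : Measurable q) (hrm : Measurable r)
    (hp0 : ∀ x, 0 ≤ p x) (hq0 : ∀ x, 0 ≤ q x) (hr0 : ∀ x, 0 ≤ r x)
    (hpq : Integrable (fun x => psiJS (p x) (q x)) μ)
    (hqr : Integrable (fun x => psiJS (q x) (r x)) μ) :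
    Real.sqrt (∫ x, psiJS (p x) (r x) ∂μ) ≤
      Real.sqrt (∫ x, psiJS (p x) (q x) ∂μ) + Real.sqrt (∫ x, psiJS (q x) (r x) ∂μ) := by
  have e : ∀ (f g : X → ℝ), (∀ x, 0 ≤ f x) → (∀ x, 0 ≤ g x) →
      ∫ x, psiJS (f x) (g x) ∂μ = ∫ x, Real.sqrt (psiJS (f x) (g x)) ^ 2 ∂μ := by
    intro f g hf hg
    apply integral_congr_ae
    filter_upwards with x
    exact (Real.sq_sqrt (psiJS_nonneg (hf x) (hg x))).symm
  rw [e p r hp0 hr0, e p q hp0 hq0, e q r hq0 hr0]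
  apply sqrt_int_tri
  · exact ((psi_comp_measurable hpm hqm).sqrt).aestronglyMeasurable
  · exact ((psi_comp_measurable hqm hrm).sqrt).aestronglyMeasurable
  · filter_upwards with x; exact Real.sqrt_nonneg _
  · filter_upwards with x; exact Real.sqrt_nonneg _
  · filter_upwards with x; exact Real.sqrt_nonneg _
  · apply hpq.congr
    filter_upwards with x
    exact (Real.sq_sqrt (psiJS_nonneg (hp0 x) (hq0 x))).symm
  · apply hqr.congr
    filter_upwards with x
    exact (Real.sq_sqrt (psiJS_nonneg (hq0 x) (hr0 x))).symm
  · filter_upwards with x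
    exact psiJS_sqrt_tri (hp0 x) (hq0 x) (hr0 x)

lemma final_bound {L d : ℝ} (hL : 0 ≤ L) (hd0 : 0 ≤ d) (hd2 : d ≤ 2) :
    Real.sqrt (Real.log 2/2 * (L * d)) ≤
      Real.sqrt (L * Real.log 2) / 2 ^ ((1:ℝ)/4) * d ^ ((1:ℝ)/4) := by
  have hlog2 : (0:ℝ) ≤ Real.log 2 := Real.log_nonneg one_le_two
  rcases eq_or_lt_of_le hd0 with h0 | hdpos
  · rw [← h0]
    rw [Real.zero_rpow (by norm_num : (1:ℝ)/4 ≠ 0)]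
    simp
  · have h1 : Real.sqrt (d/2) ≤ (d/2) ^ ((1:ℝ)/4) := by
      rw [Real.sqrt_eq_rpow]
      rw [show (1:ℝ)/2 = ((1:ℝ)/4) + ((1:ℝ)/4) by norm_num, Real.rpow_add (by positivity)]
      have hle1 : (d/2 : ℝ) ^ ((1:ℝ)/4) ≤ 1 :=
        Real.rpow_le_one (by positivity) (by linarith) (by norm_num)
      nlinarith [Real.rpow_nonneg (show (0:ℝ) ≤ d/2 by positivity) ((1:ℝ)/4)]
    calc Real.sqrt (Real.log 2/2 * (L * d))
        = Real.sqrt ((L * Real.log 2) * (d/2)) := by ring_nf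
      _ = Real.sqrt (L * Real.log 2) * Real.sqrt (d/2) := Real.sqrt_mul (by positivity) _
      _ ≤ Real.sqrt (L * Real.log 2) * ((d/2) ^ ((1:ℝ)/4)) :=
          mul_le_mul_of_nonneg_left h1 (Real.sqrt_nonneg _)
      _ = Real.sqrt (L * Real.log 2) * (d ^ ((1:ℝ)/4) / 2 ^ ((1:ℝ)/4)) := by
          rw [Real.div_rpow hd0 (by norm_num)]
      _ = Real.sqrt (L * Real.log 2) / 2 ^ ((1:ℝ)/4) * d ^ ((1:ℝ)/4) := by ring

lemma const_lt {L : ℝ} (hL : 0 < L) :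
    Real.sqrt (L * Real.log 2) / 2 ^ ((1:ℝ)/4) < Real.sqrt L := by
  rw [Real.sqrt_mul hL.le, div_lt_iff₀ (by positivity)]
  apply mul_lt_mul_of_pos_left _ (Real.sqrt_pos.mpr hL)
  have h1 : Real.log 2 < 1 := by
    have := Real.log_two_lt_d9
    linarith
  calc Real.sqrt (Real.log 2) < Real.sqrt 1 :=
        Real.sqrt_lt_sqrt (Real.log_nonneg one_le_two) h1
    _ = 1 := Real.sqrt_one
    _ ≤ 2 ^ ((1:ℝ)/4) := Real.one_le_rpow (by norm_num) (by norm_num)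

/-- Hölder continuity of `w ↦ sqrt(JS(p_w, p*))`: under Assumption (Ap) and
`μ(X) ≤ 1`, for all `u, v ∈ W`,
`|sqrt(JS(p_u,p*)) - sqrt(JS(p_v,p*))| ≤ (sqrt(L_p log 2)/2^{1/4}) ‖u-v‖_∞^{1/4}`,
and the constant satisfies `sqrt(L_p log 2)/2^{1/4} < sqrt(L_p)`. -/
theorem statement_8
    {X : Type*} [MeasurableSpace X]
    (μ : Measure X) [SigmaFinite μ] (hμ : μ Set.univ ≤ 1)
    (pstar : X → ℝ) (hpstar0 : ∀ x, 0 ≤ pstar x) (hpstarm : Measurable pstar)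
    (hpstar1 : ∫ x, pstar x ∂μ = 1)
    {dG : ℕ} (Wset : Set (Fin dG → ℝ))
    (hWcube : ∀ w ∈ Wset, ∀ i, w i ∈ Set.Icc (-1 : ℝ) 1)
    (pw : (Fin dG → ℝ) → X → ℝ) (hpw0 : ∀ w x, 0 ≤ pw w x)
    (hpwm : ∀ w, Measurable (pw w))
    (hpw1 : ∀ w ∈ Wset, ∫ x, pw w x ∂μ = 1)
    (Lp : ℝ) (hLp : 0 < Lp)
    -- Assumption (Ap)
    (hAp : ∀ x, ∀ u ∈ Wset, ∀ v ∈ Wset, |pw u x - pw v x| ≤ Lp * ‖u - v‖)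
    (u : Fin dG → ℝ) (hu : u ∈ Wset) (v : Fin dG → ℝ) (hv : v ∈ Wset) :
    |Real.sqrt (JSdiv μ (pw u) pstar) - Real.sqrt (JSdiv μ (pw v) pstar)| ≤
        Real.sqrt (Lp * Real.log 2) / 2 ^ ((1 : ℝ) / 4) * ‖u - v‖ ^ ((1 : ℝ) / 4) ∧
      Real.sqrt (Lp * Real.log 2) / 2 ^ ((1 : ℝ) / 4) < Real.sqrt Lp := by
  haveI : IsFiniteMeasure μ := ⟨lt_of_le_of_lt hμ ENNReal.one_lt_top⟩
  -- integrability of the densities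
  have dens_int : ∀ w ∈ Wset, Integrable (pw w) μ := by
    intro w hw
    by_contra hcon
    have := hpw1 w hw
    rw [integral_undef hcon] at this
    norm_num at this
  have hpstar_int : Integrable pstar μ := by
    by_contra hcon
    rw [integral_undef hcon] at hpstar1
    norm_num at hpstar1
  have hu_int := dens_int u hu
  have hv_int := dens_int v hv
  -- all the pairwise term integrabilities
  have i_us1 := term_integrable hu_int hpstar_int (hpwm u) hpstarm (hpw0 u) hpstar0
  have i_us2 := term_integrable hpstar_int hu_int hpstarm (hpwm u) hpstar0 (hpw0 u)
  have i_vs1 := term_integrable hv_int hpstar_int (hpwm v) hpstarm (hpw0 v) hpstar0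
  have i_vs2 := term_integrable hpstar_int hv_int hpstarm (hpwm v) hpstar0 (hpw0 v)
  have i_uv1 := term_integrable hu_int hv_int (hpwm u) (hpwm v) (hpw0 u) (hpw0 v)
  have i_uv2 := term_integrable hv_int hu_int (hpwm v) (hpwm u) (hpw0 v) (hpw0 u)
  -- the second term of JSdiv p q uses log (2 q/(p+q)); note term_integrable gives q,p order:
  have i_us2' : Integrable (fun x => pstar x * Real.log (2*pstar x/(pw u x + pstar x))) μ := by
    have : (fun x => pstar x * Real.log (2*pstar x/(pstar x + pw u x)))
        = fun x => pstar x * Real.log (2*pstar x/(pw u x + pstar x)) := by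
      funext x; rw [add_comm]
    rw [← this]; exact i_us2
  have i_vs2' : Integrable (fun x => pstar x * Real.log (2*pstar x/(pw v x + pstar x))) μ := by
    have : (fun x => pstar x * Real.log (2*pstar x/(pstar x + pw v x)))
        = fun x => pstar x * Real.log (2*pstar x/(pw v x + pstar x)) := by
      funext x; rw [add_comm]
    rw [← this]; exact i_vs2
  have i_uv2' : Integrable (fun x => pw v x * Real.log (2*pw v x/(pw u x + pw v x))) μ := by
    have : (fun x => pw v x * Real.log (2*pw v x/(pw v x + pw u x)))
        = fun x => pw v x * Real.log (2*pw v x/(pw u x + pw v x)) := by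
      funext x; rw [add_comm]
    rw [← this]; exact i_uv2
  -- rewrite the JSdiv's
  rw [JSdiv_eq i_us1 i_us2', JSdiv_eq i_vs1 i_vs2']
  -- triangle inequality
  have ipsi_uv : Integrable (fun x => psiJS (pw u x) (pw v x)) μ :=
    psi_comp_integrable i_uv1 i_uv2'
  have ipsi_us : Integrable (fun x => psiJS (pw u x) (pstar x)) μ :=
    psi_comp_integrable i_us1 i_us2'
  have ipsi_vs : Integrable (fun x => psiJS (pw v x) (pstar x)) μ :=
    psi_comp_integrable i_vs1 i_vs2'
  have ipsi_vu : Integrable (fun x => psiJS (pw v x) (pw u x)) μ := by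
    apply ipsi_uv.congr
    filter_upwards with x
    exact psiJS_symm _ _
  have t1 : Real.sqrt (∫ x, psiJS (pw u x) (pstar x) ∂μ) ≤
      Real.sqrt (∫ x, psiJS (pw u x) (pw v x) ∂μ) +
      Real.sqrt (∫ x, psiJS (pw v x) (pstar x) ∂μ) :=
    JS_sqrt_tri (hpwm u) (hpwm v) hpstarm (hpw0 u) (hpw0 v) hpstar0 ipsi_uv ipsi_vs
  have esymm : ∫ x, psiJS (pw v x) (pw u x) ∂μ = ∫ x, psiJS (pw u x) (pw v x) ∂μ := by
    apply integral_congr_ae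
    filter_upwards with x
    exact psiJS_symm _ _
  have t2 : Real.sqrt (∫ x, psiJS (pw v x) (pstar x) ∂μ) ≤
      Real.sqrt (∫ x, psiJS (pw u x) (pw v x) ∂μ) +
      Real.sqrt (∫ x, psiJS (pw u x) (pstar x) ∂μ) := by
    have := JS_sqrt_tri (hpwm v) (hpwm u) hpstarm (hpw0 v) (hpw0 u) hpstar0 ipsi_vu ipsi_us
    rwa [esymm] at this
  have habs : |Real.sqrt (∫ x, psiJS (pw u x) (pstar x) ∂μ) -
      Real.sqrt (∫ x, psiJS (pw v x) (pstar x) ∂μ)| ≤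
      Real.sqrt (∫ x, psiJS (pw u x) (pw v x) ∂μ) := by
    rw [abs_sub_le_iff]
    constructor <;> linarith
  -- bound the middle JS
  have hd0 : (0:ℝ) ≤ ‖u - v‖ := norm_nonneg _
  have hlog2 : (0:ℝ) ≤ Real.log 2 := Real.log_nonneg one_le_two
  have hbound : ∫ x, psiJS (pw u x) (pw v x) ∂μ ≤ Real.log 2/2 * (Lp * ‖u - v‖) := by
    have hC : (0:ℝ) ≤ Real.log 2/2 * (Lp * ‖u - v‖) := by positivity
    calc ∫ x, psiJS (pw u x) (pw v x) ∂μ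
        ≤ ∫ _x, Real.log 2/2 * (Lp * ‖u - v‖) ∂μ := by
          apply integral_mono_of_nonneg
          · filter_upwards with x
            exact psiJS_nonneg (hpw0 u x) (hpw0 v x)
          · exact integrable_const _
          · filter_upwards with x
            calc psiJS (pw u x) (pw v x) ≤ Real.log 2/2 * |pw u x - pw v x| :=
                  psiJS_le (hpw0 u x) (hpw0 v x)
              _ ≤ Real.log 2/2 * (Lp * ‖u - v‖) := by
                  apply mul_le_mul_of_nonneg_left (hAp x u hu v hv) (by positivity)
      _ = (μ Set.univ).toReal * (Real.log 2/2 * (Lp * ‖u - v‖)) := by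
          rw [integral_const]; simp [smul_eq_mul, Measure.real]
      _ ≤ 1 * (Real.log 2/2 * (Lp * ‖u - v‖)) := by
          apply mul_le_mul_of_nonneg_right _ hC
          calc (μ Set.univ).toReal ≤ (1:ENNReal).toReal := ENNReal.toReal_mono ENNReal.one_ne_top hμ
            _ = 1 := by simp
      _ = Real.log 2/2 * (Lp * ‖u - v‖) := by ring
  have hd2 : ‖u - v‖ ≤ 2 := by
    apply (pi_norm_le_iff_of_nonneg (by norm_num : (0:ℝ) ≤ 2)).mpr
    intro i
    have h1 := hWcube u hu i
    have h2 := hWcube v hv i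
    simp only [Pi.sub_apply, Real.norm_eq_abs]
    rw [abs_le]
    exact ⟨by linarith [h1.1, h2.2], by linarith [h1.2, h2.1]⟩
  constructor
  · calc |Real.sqrt (∫ x, psiJS (pw u x) (pstar x) ∂μ) -
        Real.sqrt (∫ x, psiJS (pw v x) (pstar x) ∂μ)|
        ≤ Real.sqrt (∫ x, psiJS (pw u x) (pw v x) ∂μ) := habs
      _ ≤ Real.sqrt (Real.log 2/2 * (Lp * ‖u - v‖)) := Real.sqrt_le_sqrt hbound
      _ ≤ Real.sqrt (Lp * Real.log 2) / 2 ^ ((1:ℝ)/4) * ‖u - v‖ ^ ((1:ℝ)/4) :=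
          final_bound hLp.le hd0 hd2
  · exact const_lt hLp
end

section
/- Let g_u and g_v be two bijective generators in H²_Λ([0,1]^d, H_G) mapping [0,1]^d into itself, and let p_u, p_v be the corresponding densities p_w(x) = |det ∇g_w(g_w^{−1}(x))|^{−1}. Then ‖p_u − p_v‖_{L_∞([0,1]^d)} ≤ L₂ · ‖g_u − g_v‖_{H¹([0,1]^d)}, where L₂ = d^{2 + d/2} Λ^{3d} (1 + H_G Λ √d). -/
open MeasureTheory

/-- The unit cube `[0,1]^d` in `ℝ^d`. -/
def unitCube (d : ℕ) : Set (EuclideanSpace ℝ (Fin d)) :=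
  {x | ∀ i, 0 ≤ x i ∧ x i ≤ 1}

/-- `s(α) = ⌈α⌉ - 1`, the largest integer strictly less than `α` (for `α > 0`). -/
noncomputable def holderIdx (α : ℝ) : ℕ := ⌈α⌉₊ - 1

/-- Membership in the Hölder ball `H^α(Ω, H)`. -/
def HolderBallMem {d : ℕ} {F : Type*} [NormedAddCommGroup F] [NormedSpace ℝ F]
    (α H : ℝ) (Ω : Set (EuclideanSpace ℝ (Fin d)))
    (f : EuclideanSpace ℝ (Fin d) → F) : Prop :=
  ContDiffOn ℝ (holderIdx α) f Ω ∧
  (∀ i ≤ holderIdx α, ∀ x ∈ Ω, ‖iteratedFDerivWithin ℝ i f Ω x‖ ≤ H) ∧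
  (∀ x ∈ Ω, ∀ y ∈ Ω,
    ‖iteratedFDerivWithin ℝ (holderIdx α) f Ω x
      - iteratedFDerivWithin ℝ (holderIdx α) f Ω y‖ ≤
        H * (min 1 ‖x - y‖) ^ (α - (holderIdx α : ℝ)))

/-- Membership in the `Λ`-regular Hölder ball `H^α_Λ(Ω, H)`. -/
def HolderBallRegMem {d : ℕ} (α H Λ : ℝ) (Ω : Set (EuclideanSpace ℝ (Fin d)))
    (f : EuclideanSpace ℝ (Fin d) → EuclideanSpace ℝ (Fin d)) : Prop :=
  HolderBallMem α H Ω f ∧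
  ∀ x ∈ Ω, ∀ u : EuclideanSpace ℝ (Fin d),
    Λ⁻¹ * ‖u‖ ≤ ‖fderivWithin ℝ f Ω x u‖ ∧ ‖fderivWithin ℝ f Ω x u‖ ≤ Λ * ‖u‖


open Finset Matrix Topology





lemma amgm_prod_le_one {n : ℕ} (hn : 0 < n) (μ : Fin n → ℝ) (h0 : ∀ i, 0 ≤ μ i)
    (hsum : ∑ i, μ i ≤ n) : ∏ i, μ i ≤ 1 := by
  have hn' : (0:ℝ) < n := by exact_mod_cast hn
  have hw : ∀ i ∈ (univ : Finset (Fin n)), (0:ℝ) ≤ 1/n := fun i _ => by positivity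
  have hw' : ∑ _i ∈ (univ : Finset (Fin n)), (1:ℝ)/n = 1 := by
    simp [Finset.card_univ, mul_inv_cancel₀ hn'.ne']
  have key := Real.geom_mean_le_arith_mean_weighted univ (fun _ => 1/n) μ hw hw'
    (fun i _ => h0 i)
  have h2 : ∑ i, (1/n : ℝ) * μ i ≤ 1 := by
    rw [← Finset.mul_sum, div_mul_eq_mul_div, one_mul, div_le_one hn']
    exact hsum
  have h3 : ∏ i, μ i ^ ((1:ℝ)/n) ≤ 1 := le_trans key h2
  have h4 : (∏ i, μ i ^ ((1:ℝ)/n)) ^ (n:ℝ) ≤ 1 := by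
    apply Real.rpow_le_one _ h3 (by positivity)
    exact Finset.prod_nonneg fun i _ => Real.rpow_nonneg (h0 i) _
  calc ∏ i, μ i = (∏ i, μ i ^ ((1:ℝ)/n)) ^ (n:ℝ) := by
        rw [← Real.finset_prod_rpow _ _ (fun i _ => Real.rpow_nonneg (h0 i) _)]
        refine Finset.prod_congr rfl fun i _ => ?_
        rw [← Real.rpow_mul (h0 i)]
        rw [one_div, inv_mul_cancel₀ hn'.ne', Real.rpow_one]
    _ ≤ 1 := h4



/-- If the squared entries of `N` sum to at most `n`, then `(det N)^2 ≤ 1`. -/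
lemma det_sq_le_one {n : ℕ} (hn : 0 < n) (N : Matrix (Fin n) (Fin n) ℝ)
    (h : ∑ j, ∑ i, N i j ^ 2 ≤ n) : N.det ^ 2 ≤ 1 := by
  have hP : (Nᵀ * N).PosSemidef := by
    have := Matrix.posSemidef_conjTranspose_mul_self N
    simpa using this
  have hH : (Nᵀ * N).IsHermitian := hP.1
  have hdet : (Nᵀ * N).det = ∏ i, hH.eigenvalues i := by
    simpa using hH.det_eq_prod_eigenvalues
  have htr : (Nᵀ * N).trace = ∑ i, hH.eigenvalues i := by
    conv_lhs => rw [hH.spectral_theorem]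
    rw [Unitary.conjStarAlgAut_apply, Matrix.trace_mul_cycle]
    rw [Unitary.coe_star_mul_self, Matrix.one_mul, Matrix.trace_diagonal]
    simp
  have htr2 : (Nᵀ * N).trace = ∑ j, ∑ i, N i j ^ 2 := by
    simp [Matrix.trace, Matrix.diag, Matrix.mul_apply, sq]
  have hs : ∑ i, hH.eigenvalues i ≤ n := by rw [← htr, htr2]; exact h
  have hprod : ∏ i, hH.eigenvalues i ≤ 1 :=
    amgm_prod_le_one hn _ (fun i => hP.eigenvalues_nonneg i) hs
  calc N.det ^ 2 = (Nᵀ * N).det := by rw [Matrix.det_mul, Matrix.det_transpose, sq]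
    _ = ∏ i, hH.eigenvalues i := hdet
    _ ≤ 1 := hprod

/-- Hadamard's inequality (column version). -/
lemma hadamard_col {n : ℕ} (T : Matrix (Fin n) (Fin n) ℝ) :
    |T.det| ≤ ∏ j, Real.sqrt (∑ i, T i j ^ 2) := by
  rcases Nat.eq_zero_or_pos n with hn | hn
  · subst hn; simp [Matrix.det_isEmpty]
  set c : Fin n → ℝ := fun j => Real.sqrt (∑ i, T i j ^ 2) with hc
  have hc0 : ∀ j, 0 ≤ c j := fun j => Real.sqrt_nonneg _
  by_cases hz : ∃ j, c j = 0
  · obtain ⟨j, hj⟩ := hz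
    have hcol : ∀ i, T i j = 0 := by
      intro i
      have hsum : ∑ i, T i j ^ 2 = 0 := by
        by_contra hne
        have hpos : 0 < ∑ i, T i j ^ 2 :=
          lt_of_le_of_ne (Finset.sum_nonneg fun i _ => sq_nonneg _) (Ne.symm hne)
        exact absurd hj (by positivity)
      have := (Finset.sum_eq_zero_iff_of_nonneg (fun i _ => sq_nonneg (T i j))).mp hsum i
        (Finset.mem_univ i)
      exact pow_eq_zero_iff (n := 2) (by norm_num) |>.mp this
    have : T.det = 0 := Matrix.det_eq_zero_of_column_eq_zero j hcol
    rw [this, abs_zero]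
    exact Finset.prod_nonneg fun j _ => hc0 j
  · push_neg at hz
    have hcpos : ∀ j, 0 < c j := fun j => lt_of_le_of_ne (hc0 j) (Ne.symm (hz j))
    set N : Matrix (Fin n) (Fin n) ℝ := fun i j => T i j / c j with hN
    have hTN : T = N * Matrix.diagonal c := by
      ext i j
      rw [Matrix.mul_diagonal]
      simp [hN, Matrix.mul_diagonal, div_mul_cancel₀,
        (hz j)]
    have hNsum : ∑ j, ∑ i, N i j ^ 2 ≤ n := by
      have : ∀ j, ∑ i, N i j ^ 2 = 1 := by
        intro j
        have hcsq : c j ^ 2 = ∑ i, T i j ^ 2 := Real.sq_sqrt (Finset.sum_nonneg fun i _ => sq_nonneg _)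
        simp only [hN, div_pow]
        rw [← Finset.sum_div, ← hcsq, div_self (pow_ne_zero 2 (hz j))]
      rw [Finset.sum_congr rfl fun j _ => this j]
      simp
    have hdet2 : N.det ^ 2 ≤ 1 := det_sq_le_one hn N hNsum
    have hNdet : |N.det| ≤ 1 := (sq_le_one_iff_abs_le_one N.det).mp hdet2
    calc |T.det| = |N.det| * ∏ j, c j := by
          rw [hTN, Matrix.det_mul, Matrix.det_diagonal, abs_mul,
            abs_of_nonneg (Finset.prod_nonneg fun j _ => hc0 j)]
      _ ≤ 1 * ∏ j, c j := by
          exact mul_le_mul_of_nonneg_right hNdet (Finset.prod_nonneg fun j _ => hc0 j)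
      _ = ∏ j, c j := one_mul _


variable {d : ℕ}
local notation "E" => EuclideanSpace ℝ (Fin d)

/-- The matrix of a linear map on Euclidean space in the standard basis. -/
noncomputable def matOf (L : E →ₗ[ℝ] E) : Matrix (Fin d) (Fin d) ℝ :=
  fun i j => L (EuclideanSpace.single j 1) i

lemma matOf_det (L : E →ₗ[ℝ] E) : (matOf L).det = LinearMap.det L := by
  set b := (EuclideanSpace.basisFun (Fin d) ℝ).toBasis with hb
  have h : LinearMap.toMatrix b b L = matOf L := by
    ext i j
    rw [LinearMap.toMatrix_apply]
    simp [hb, matOf, OrthonormalBasis.coe_toBasis, EuclideanSpace.basisFun_apply,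
      EuclideanSpace.basisFun_repr]
  rw [← h, LinearMap.det_toMatrix]

lemma col_norm_eq (L : E →ₗ[ℝ] E) (j : Fin d) :
    Real.sqrt (∑ i, (matOf L) i j ^ 2) = ‖L (EuclideanSpace.single j 1)‖ := by
  rw [EuclideanSpace.norm_eq]
  congr 1
  refine Finset.sum_congr rfl fun i _ => ?_
  rw [Real.norm_eq_abs, sq_abs]
  rfl



lemma det_le_of_cols {n : ℕ} (T : Matrix (Fin n) (Fin n) ℝ) (c : Fin n → ℝ)
    (hc : ∀ j, Real.sqrt (∑ i, T i j ^ 2) ≤ c j) : |T.det| ≤ ∏ j, c j :=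
  (hadamard_col T).trans (Finset.prod_le_prod (fun j _ => Real.sqrt_nonneg _) fun j _ => hc j)

/-- Column-telescoping bound for determinant differences. -/
lemma det_sub_le {n : ℕ} (P Q : Matrix (Fin n) (Fin n) ℝ) (Λ e : ℝ)
    (hP : ∀ j, Real.sqrt (∑ i, P i j ^ 2) ≤ Λ) (hQ : ∀ j, Real.sqrt (∑ i, Q i j ^ 2) ≤ Λ)
    (hD : ∀ j, Real.sqrt (∑ i, (P i j - Q i j) ^ 2) ≤ e) :
    |P.det - Q.det| ≤ n * Λ ^ (n - 1) * e := by
  rcases Nat.eq_zero_or_pos n with hn | hn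
  · subst hn
    simp [Matrix.det_isEmpty]
  have hΛ0 : 0 ≤ Λ := (Real.sqrt_nonneg _).trans (hP ⟨0, hn⟩)
  have he0 : 0 ≤ e := (Real.sqrt_nonneg _).trans (hD ⟨0, hn⟩)
  set R : Finset (Fin n) → Matrix (Fin n) (Fin n) ℝ :=
    fun s i j => if j ∈ s then Q i j else P i j with hR
  have key : ∀ s : Finset (Fin n), |P.det - (R s).det| ≤ s.card * Λ ^ (n - 1) * e := by
    intro s
    induction s using Finset.induction_on with
    | empty => simp [hR]
    | @insert j s hj ih =>
      have h1 : R (insert j s) = updateCol (R s) j (fun i => Q i j) := by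
        ext i j'
        by_cases h : j' = j
        · subst h; rw [Matrix.updateCol_apply]; simp [hR, Matrix.updateCol_apply]
        · rw [Matrix.updateCol_apply]; simp [hR, Matrix.updateCol_apply, h, Finset.mem_insert]
      have h2 : R s = updateCol (R s) j (fun i => P i j) := by
        ext i j'
        by_cases h : j' = j
        · subst h; rw [Matrix.updateCol_apply]; simp [hR, Matrix.updateCol_apply, hj]
        · simp [Matrix.updateCol_apply, h]
      have h3 : (R s).det - (R (insert j s)).det
          = (updateCol (R s) j (fun i => P i j - Q i j)).det := by
        conv_lhs => rw [h2, h1]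
        have := Matrix.det_updateCol_add (R s) j (fun i => P i j - Q i j) (fun i => Q i j)
        have h4 : ((fun i => P i j - Q i j) + fun i => Q i j) = fun i => P i j := by
          funext i; simp
        rw [h4] at this
        linarith [this]
      have h5 : |(updateCol (R s) j (fun i => P i j - Q i j)).det| ≤ Λ ^ (n - 1) * e := by
        have hcol : ∀ j', Real.sqrt (∑ i, (updateCol (R s) j (fun i => P i j - Q i j)) i j' ^ 2)
            ≤ (fun j' => if j' = j then e else Λ) j' := by
          intro j'
          by_cases h : j' = j
          · subst h
            simp only [Matrix.updateCol_apply, if_pos rfl, if_true]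
            simpa using hD j'
          · simp only [Matrix.updateCol_apply, if_neg h, h, if_false]
            by_cases hm : j' ∈ s
            · simpa [hR, hm] using hQ j'
            · simpa [hR, hm] using hP j'
        have := det_le_of_cols _ _ hcol
        refine this.trans ?_
        rw [← Finset.mul_prod_erase univ _ (Finset.mem_univ j)]
        rw [if_pos rfl]
        have : ∏ j' ∈ univ.erase j, (if j' = j then e else Λ) = Λ ^ (n - 1) := by
          rw [Finset.prod_congr rfl (fun j' hj' => if_neg (Finset.mem_erase.mp hj').1),
            Finset.prod_const, Finset.card_erase_of_mem (Finset.mem_univ j), Finset.card_univ,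
            Fintype.card_fin]
        rw [this, mul_comm]
      calc |P.det - (R (insert j s)).det|
          ≤ |P.det - (R s).det| + |(R s).det - (R (insert j s)).det| := by
            have := abs_sub_abs_le_abs_sub (P.det - (R s).det) 0
            exact abs_sub_le _ _ _
        _ ≤ s.card * Λ ^ (n - 1) * e + Λ ^ (n - 1) * e := by
            rw [h3]
            exact add_le_add ih h5
        _ = (insert j s).card * Λ ^ (n - 1) * e := by
            rw [Finset.card_insert_of_notMem hj]
            push_cast
            ring
  have hQfin : R univ = Q := by ext i j; simp [hR]
  have := key univ
  rwa [hQfin, Finset.card_univ, Fintype.card_fin] at this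




/-- Determinant bound from column norms, linear-map version. -/
lemma det_le_of_op (L : E →ₗ[ℝ] E) (c : ℝ)
    (hc : ∀ j, ‖L (EuclideanSpace.single j 1)‖ ≤ c) : |LinearMap.det L| ≤ c ^ d := by
  rw [← matOf_det]
  have := det_le_of_cols (matOf L) (fun _ => c) (fun j => (col_norm_eq L j).le.trans (hc j))
  simpa using this

/-- Lower bound on `|det|` for a co-expansive continuous linear map. -/
lemma det_lower {Λ : ℝ} (hΛ : 0 < Λ) (T : E →L[ℝ] E)
    (hT : ∀ u : E, Λ⁻¹ * ‖u‖ ≤ ‖T u‖) :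
    (Λ ^ d)⁻¹ ≤ |LinearMap.det (T.toLinearMap)| := by
  have hinj : Function.Injective T.toLinearMap := by
    intro u v huv
    have h : T (u - v) = 0 := by
      simp only [map_sub]
      simpa [sub_eq_zero] using huv
    have h2 := hT (u - v)
    rw [h, norm_zero] at h2
    have h3 : ‖u - v‖ ≤ 0 := by
      nlinarith [norm_nonneg (u - v), inv_pos.mpr hΛ]
    have hn : ‖u - v‖ = 0 := le_antisymm h3 (norm_nonneg _)
    rwa [norm_sub_eq_zero_iff] at hn
  have hsurj : Function.Surjective T.toLinearMap :=
    (LinearMap.injective_iff_surjective).mp hinj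
  set Ae := LinearEquiv.ofBijective T.toLinearMap ⟨hinj, hsurj⟩ with hAe
  have hcols : ∀ j, ‖Ae.symm.toLinearMap (EuclideanSpace.single j 1)‖ ≤ Λ := by
    intro j
    set w := Ae.symm (EuclideanSpace.single j 1) with hw
    have hTw : T w = EuclideanSpace.single j 1 :=
      Ae.apply_symm_apply (EuclideanSpace.single j 1)
    have h1 := hT w
    rw [hTw, EuclideanSpace.norm_single, norm_one] at h1
    calc ‖Ae.symm.toLinearMap (EuclideanSpace.single j 1)‖ = ‖w‖ := rfl
      _ ≤ Λ := by
          rw [inv_mul_le_iff₀ hΛ] at h1  -- Λ⁻¹ * ‖w‖ ≤ 1 → ‖w‖ ≤ Λ * 1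
          simpa using h1
  have hdetsymm : |LinearMap.det Ae.symm.toLinearMap| ≤ Λ ^ d :=
    det_le_of_op _ Λ hcols
  have hcomp : T.toLinearMap ∘ₗ Ae.symm.toLinearMap = LinearMap.id := by
    ext u i
    have h := Ae.apply_symm_apply u
    calc (T.toLinearMap ∘ₗ Ae.symm.toLinearMap) u i = (Ae (Ae.symm u)) i := rfl
      _ = u i := by rw [h]
  have hprod : LinearMap.det T.toLinearMap * LinearMap.det Ae.symm.toLinearMap = 1 := by
    rw [← LinearMap.det_comp, hcomp, LinearMap.det_id]
  have h1 : 1 ≤ |LinearMap.det T.toLinearMap| * Λ ^ d := by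
    calc (1:ℝ) = |LinearMap.det T.toLinearMap * LinearMap.det Ae.symm.toLinearMap| := by
          rw [hprod, abs_one]
      _ = |LinearMap.det T.toLinearMap| * |LinearMap.det Ae.symm.toLinearMap| := abs_mul _ _
      _ ≤ |LinearMap.det T.toLinearMap| * Λ ^ d :=
          mul_le_mul_of_nonneg_left hdetsymm (abs_nonneg _)
  rw [inv_le_iff_one_le_mul₀ (by positivity)]
  linarith [h1]




lemma coord_le_norm (y : E) (i : Fin d) : |y i| ≤ ‖y‖ := by
  rw [EuclideanSpace.norm_eq, ← Real.sqrt_sq_eq_abs]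
  apply Real.sqrt_le_sqrt
  have : y i ^ 2 = ‖y i‖ ^ 2 := by rw [Real.norm_eq_abs, sq_abs]
  rw [this]
  exact Finset.single_le_sum (f := fun j => ‖y j‖ ^ 2) (fun j _ => sq_nonneg _)
    (Finset.mem_univ i)

lemma sqrt_sum_sq_le {n : ℕ} (y : Fin n → ℝ) (m : ℝ) (hm : 0 ≤ m) (h : ∀ i, |y i| ≤ m) :
    Real.sqrt (∑ i, y i ^ 2) ≤ Real.sqrt n * m := by
  have h1 : ∑ i, y i ^ 2 ≤ n * m ^ 2 := by
    calc ∑ i, y i ^ 2 ≤ ∑ _i : Fin n, m ^ 2 := by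
          refine Finset.sum_le_sum fun i _ => ?_
          rw [← sq_abs]
          exact pow_le_pow_left₀ (abs_nonneg _) (h i) 2
      _ = n * m ^ 2 := by simp [Finset.card_univ, mul_comm]
  calc Real.sqrt (∑ i, y i ^ 2) ≤ Real.sqrt (n * m ^ 2) := Real.sqrt_le_sqrt h1
    _ = Real.sqrt n * m := by
        rw [Real.sqrt_mul (by positivity), Real.sqrt_sq hm]

lemma norm_le_sqrt_card (y : E) (m : ℝ) (hm : 0 ≤ m) (h : ∀ i, |y i| ≤ m) :
    ‖y‖ ≤ Real.sqrt d * m := by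
  rw [EuclideanSpace.norm_eq]
  have : ∀ i, ‖y i‖ ^ 2 = y i ^ 2 := fun i => by rw [Real.norm_eq_abs, sq_abs]
  rw [Finset.sum_congr rfl fun i _ => this i]
  exact sqrt_sum_sq_le y m hm h

lemma cube_convex : Convex ℝ (unitCube d) := by
  intro x hx y hy a b ha hb hab
  intro i
  have hxi := hx i
  have hyi := hy i
  have hcoord : (a • x + b • y) i = a * x i + b * y i := rfl
  rw [hcoord]
  constructor
  · have := mul_nonneg ha hxi.1
    have := mul_nonneg hb hyi.1
    linarith
  · nlinarith [hxi.1, hxi.2, hyi.1, hyi.2]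

lemma cube_closed : IsClosed (unitCube d) := by
  have : unitCube d = ⋂ i, ((EuclideanSpace.proj i : E →L[ℝ] ℝ) ⁻¹' Set.Icc 0 1) := by
    ext x
    simp [unitCube, Set.mem_iInter, Set.mem_preimage, Set.mem_Icc]
  rw [this]
  exact isClosed_iInter fun i => isClosed_Icc.preimage (EuclideanSpace.proj i).continuous

lemma cube_compact : IsCompact (unitCube d) := by
  refine Metric.isCompact_of_isClosed_isBounded cube_closed ?_
  apply Metric.isBounded_closedBall (x := (0 : E)) (r := Real.sqrt d) |>.subset
  intro x hx
  rw [Metric.mem_closedBall, dist_zero_right]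
  have := norm_le_sqrt_card x 1 zero_le_one fun i => by
    have := hx i; rw [abs_le]; constructor <;> linarith [this.1, this.2]
  simpa using this

lemma cube_interior_nonempty (hd : 0 < d) : (interior (unitCube d)).Nonempty := by
  classical
  set c : E := (WithLp.equiv 2 (Fin d → ℝ)).symm (fun _ => (1:ℝ)/2) with hc
  refine ⟨c, ?_⟩
  rw [mem_interior]
  refine ⟨Metric.ball c (1/2), ?_, Metric.isOpen_ball, Metric.mem_ball_self (by norm_num)⟩
  intro y hy
  intro i
  have h1 : |y i - c i| ≤ ‖y - c‖ := by
    have := coord_le_norm (y - c) i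
    simpa using this
  have h2 : ‖y - c‖ < 1/2 := by
    rw [Metric.mem_ball, dist_eq_norm] at hy
    exact hy
  have hci : c i = 1/2 := rfl
  rw [hci] at h1
  rw [abs_le] at h1
  constructor <;> linarith [h1.1, h1.2]

lemma cube_uniqueDiffOn (hd : 0 < d) : UniqueDiffOn ℝ (unitCube d) :=
  uniqueDiffOn_convex cube_convex (cube_interior_nonempty hd)





/-- Continuity of the inverse of a continuous bijection of the cube. -/
lemma inv_continuousOn (f finv : E → E) (hc : ContinuousOn f (unitCube d))
    (hfm : Set.MapsTo f (unitCube d) (unitCube d)) (him : Set.MapsTo finv (unitCube d) (unitCube d))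
    (hL : ∀ x ∈ unitCube d, f (finv x) = x) (hR : ∀ y ∈ unitCube d, finv (f y) = y) :
    ContinuousOn finv (unitCube d) := by
  haveI : CompactSpace (unitCube d) := isCompact_iff_compactSpace.mp cube_compact
  set e : (unitCube d) ≃ (unitCube d) :=
    { toFun := fun z => ⟨f z, hfm z.2⟩
      invFun := fun z => ⟨finv z, him z.2⟩
      left_inv := fun z => Subtype.ext (hR z z.2)
      right_inv := fun z => Subtype.ext (hL z z.2) } with he
  have hcont : Continuous e := by
    apply Continuous.subtype_mk
    exact hc.restrict
  have hsymm : Continuous e.symm := hcont.continuous_symm_of_equiv_compact_to_t2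
  rw [continuousOn_iff_continuous_restrict]
  have : (unitCube d).domRestrict finv = Subtype.val ∘ e.symm := rfl
  rw [this]
  exact continuous_subtype_val.comp hsymm

/-- Local lower bound: a C¹ map with co-expansive derivative and Lipschitz derivative
is locally co-expansive at scale δ. -/
lemma local_coexpansive {Λ HG : ℝ} (hΛ : 1 < Λ) (hHG : 0 < HG)
    (f : E → E)
    (hdiff : DifferentiableOn ℝ f (unitCube d))
    (hlow : ∀ z ∈ unitCube d, ∀ u : E, Λ⁻¹ * ‖u‖ ≤ ‖fderivWithin ℝ f (unitCube d) z u‖)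
    (hlip : ∀ z ∈ unitCube d, ∀ w ∈ unitCube d,
      ‖fderivWithin ℝ f (unitCube d) z - fderivWithin ℝ f (unitCube d) w‖ ≤ HG * ‖z - w‖)
    (z₀ : E) (hz₀ : z₀ ∈ unitCube d) (z : E) (hz : z ∈ unitCube d)
    (hclose : ‖z - z₀‖ ≤ (Λ⁻¹ - (Λ^2)⁻¹) / HG) :
    (Λ^2)⁻¹ * ‖z - z₀‖ ≤ ‖f z - f z₀‖ := by
  have hΛ0 : (0:ℝ) < Λ := lt_trans one_pos hΛ
  set δ := (Λ⁻¹ - (Λ^2)⁻¹) / HG with hδdef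
  have hδpos : 0 < δ := by
    apply div_pos _ hHG
    rw [sub_pos]
    rw [pow_two]
    rw [mul_inv]
    nlinarith [inv_pos.mpr hΛ0, (inv_lt_one_iff₀).mpr (Or.inr hΛ)]
  set s := unitCube d ∩ Metric.closedBall z₀ δ with hs
  have hconv : Convex ℝ s := cube_convex.inter (convex_closedBall _ _)
  set D := fun w => fderivWithin ℝ f (unitCube d) w with hD
  set g := fun w => f w - D z₀ w with hg
  have hgderiv : ∀ w ∈ s, HasFDerivWithinAt g (D w - D z₀) s w := by
    intro w hw
    have h1 : HasFDerivWithinAt f (D w) s w :=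
      ((hdiff w hw.1).hasFDerivWithinAt).mono Set.inter_subset_left
    have h2 : HasFDerivWithinAt (fun w => D z₀ w) (D z₀) s w :=
      (D z₀).hasFDerivAt.hasFDerivWithinAt
    exact h1.sub h2
  have hbound : ∀ w ∈ s, ‖D w - D z₀‖ ≤ HG * δ := by
    intro w hw
    calc ‖D w - D z₀‖ ≤ HG * ‖w - z₀‖ := hlip w hw.1 z₀ hz₀
      _ ≤ HG * δ := by
          apply mul_le_mul_of_nonneg_left _ hHG.le
          rw [← dist_eq_norm]
          exact Metric.mem_closedBall.mp hw.2
  have hz₀s : z₀ ∈ s := ⟨hz₀, Metric.mem_closedBall_self hδpos.le⟩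
  have hzs : z ∈ s := ⟨hz, by rw [Metric.mem_closedBall, dist_eq_norm]; exact hclose⟩
  have hmv := hconv.norm_image_sub_le_of_norm_hasFDerivWithin_le hgderiv hbound hz₀s hzs
  -- hmv : ‖g z - g z₀‖ ≤ HG * δ * ‖z - z₀‖
  have hgz : g z - g z₀ = (f z - f z₀) - D z₀ (z - z₀) := by
    simp only [hg, map_sub]
    abel
  have htriangle : ‖D z₀ (z - z₀)‖ - ‖f z - f z₀‖ ≤ HG * δ * ‖z - z₀‖ := by
    calc ‖D z₀ (z - z₀)‖ - ‖f z - f z₀‖ ≤ ‖D z₀ (z - z₀) - (f z - f z₀)‖ :=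
          norm_sub_norm_le _ _
      _ = ‖g z - g z₀‖ := by rw [hgz, norm_sub_rev]
      _ ≤ HG * δ * ‖z - z₀‖ := hmv
  have hlow' : Λ⁻¹ * ‖z - z₀‖ ≤ ‖D z₀ (z - z₀)‖ := hlow z₀ hz₀ (z - z₀)
  have hδeq : HG * δ = Λ⁻¹ - (Λ^2)⁻¹ := by
    rw [hδdef, mul_div_cancel₀ _ hHG.ne']
  nlinarith [norm_nonneg (z - z₀)]

/-- Global inverse Lipschitz bound via a continuity/chaining argument. -/
lemma inv_lipschitz {Λ HG : ℝ} (hΛ : 1 < Λ) (hHG : 0 < HG)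
    (f finv : E → E)
    (hdiff : DifferentiableOn ℝ f (unitCube d))
    (hcont : ContinuousOn f (unitCube d))
    (hlow : ∀ z ∈ unitCube d, ∀ u : E, Λ⁻¹ * ‖u‖ ≤ ‖fderivWithin ℝ f (unitCube d) z u‖)
    (hlip : ∀ z ∈ unitCube d, ∀ w ∈ unitCube d,
      ‖fderivWithin ℝ f (unitCube d) z - fderivWithin ℝ f (unitCube d) w‖ ≤ HG * ‖z - w‖)
    (hfm : Set.MapsTo f (unitCube d) (unitCube d)) (him : Set.MapsTo finv (unitCube d) (unitCube d))
    (hL : ∀ x ∈ unitCube d, f (finv x) = x) (hR : ∀ y ∈ unitCube d, finv (f y) = y)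
    (p : E) (hp : p ∈ unitCube d) (q : E) (hq : q ∈ unitCube d) :
    ‖finv p - finv q‖ ≤ Λ^2 * ‖p - q‖ := by
  have hΛ0 : (0:ℝ) < Λ := lt_trans one_pos hΛ
  set δ := (Λ⁻¹ - (Λ^2)⁻¹) / HG with hδdef
  have hδpos : 0 < δ := by
    apply div_pos _ hHG
    rw [sub_pos, pow_two, mul_inv]
    nlinarith [inv_pos.mpr hΛ0, (inv_lt_one_iff₀ (a := Λ)).mpr (Or.inr hΛ)]
  set ℓ : ℝ → E := fun t => p + t • (q - p) with hℓ
  have hline : ∀ t ∈ Set.Icc (0:ℝ) 1, ℓ t ∈ unitCube d := by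
    intro t ht
    have h1 : ℓ t = (1 - t) • p + t • q := by
      rw [hℓ]
      simp only []
      rw [smul_sub, sub_smul, one_smul]
      abel
    rw [h1]
    exact cube_convex hp hq (by linarith [ht.2]) ht.1 (by ring)
  set φ : ℝ → E := fun t => finv (ℓ t) with hφ
  have hℓcont : Continuous ℓ := by
    exact continuous_const.add (continuous_id.smul continuous_const)
  have hinvcont : ContinuousOn finv (unitCube d) :=
    inv_continuousOn f finv hcont hfm him hL hR
  have hφcont : ContinuousOn φ (Set.Icc 0 1) :=
    hinvcont.comp hℓcont.continuousOn hline
  set S : Set ℝ := {t : ℝ | ‖φ t - φ 0‖ - Λ^2 * (t * ‖q - p‖) ≤ 0} with hS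
  have hkey : Set.Icc (0:ℝ) 1 ⊆ S := by
    apply IsClosed.Icc_subset_of_forall_exists_gt
    · -- closedness of S ∩ Icc 0 1
      have hF : ContinuousOn (fun t => ‖φ t - φ 0‖ - Λ^2 * (t * ‖q - p‖)) (Set.Icc 0 1) := by
        apply ContinuousOn.sub
        · exact (hφcont.sub continuousOn_const).norm
        · exact (continuous_const.mul (continuous_id.mul continuous_const)).continuousOn
      have heq : S ∩ Set.Icc 0 1 = Set.Icc 0 1 ∩
          ((fun t => ‖φ t - φ 0‖ - Λ^2 * (t * ‖q - p‖)) ⁻¹' Set.Iic 0) := by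
        ext t
        simp [hS, Set.mem_inter_iff, and_comm]
      rw [heq]
      exact hF.preimage_isClosed_of_isClosed isClosed_Icc isClosed_Iic
    · -- 0 ∈ S
      simp [hS]
    · -- forall exists gt
      intro t₀ ht₀ y hy
      obtain ⟨ht₀S, ht₀Ico⟩ := ht₀
      have h0 : (0:ℝ) ≤ t₀ := ht₀Ico.1
      have hlt : t₀ < 1 := ht₀Ico.2
      set m := min y 1 with hm
      have hmlt : t₀ < m := lt_min hy hlt
      have hm1 : m ≤ 1 := min_le_right _ _
      have hmy : m ≤ y := min_le_left _ _
      have hIocsub : Set.Ioc t₀ m ⊆ Set.Icc (0:ℝ) 1 :=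
        fun t ht => ⟨le_trans h0 ht.1.le, le_trans ht.2 hm1⟩
      have hφt₀ : ContinuousWithinAt φ (Set.Ioc t₀ m) t₀ :=
        (hφcont t₀ ⟨h0, hlt.le⟩).mono hIocsub
      haveI := left_nhdsWithin_Ioc_neBot hmlt
      have hball : φ ⁻¹' Metric.ball (φ t₀) δ ∈ 𝓝[Set.Ioc t₀ m] t₀ :=
        hφt₀ (Metric.ball_mem_nhds (φ t₀) hδpos)
      have hmem := Filter.inter_mem hball self_mem_nhdsWithin
      obtain ⟨t, ht⟩ := Filter.nonempty_of_mem hmem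
      obtain ⟨htball, htIoc⟩ := ht
      have htd : ‖φ t - φ t₀‖ ≤ δ := by
        rw [← dist_eq_norm]
        exact (Metric.mem_ball.mp htball).le
      have hφtΩ : φ t ∈ unitCube d := him (hline t (hIocsub htIoc))
      have hφt₀Ω : φ t₀ ∈ unitCube d := him (hline t₀ ⟨h0, hlt.le⟩)
      have hlocal := local_coexpansive hΛ hHG f hdiff hlow hlip (φ t₀) hφt₀Ω (φ t) hφtΩ htd
      have hfφ : ∀ s ∈ Set.Icc (0:ℝ) 1, f (φ s) = ℓ s := fun s hs => hL _ (hline s hs)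
      have hfφt : f (φ t) = ℓ t := hfφ t (hIocsub htIoc)
      have hfφt₀ : f (φ t₀) = ℓ t₀ := hfφ t₀ ⟨h0, hlt.le⟩
      have hℓdiff : ℓ t - ℓ t₀ = (t - t₀) • (q - p) := by
        simp only [hℓ, sub_smul]
        abel
      have hnorm : ‖f (φ t) - f (φ t₀)‖ = (t - t₀) * ‖q - p‖ := by
        rw [hfφt, hfφt₀, hℓdiff, norm_smul, Real.norm_eq_abs,
          abs_of_nonneg (by linarith [htIoc.1] : (0:ℝ) ≤ t - t₀)]
      have hstep : ‖φ t - φ t₀‖ ≤ Λ^2 * ((t - t₀) * ‖q - p‖) := by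
        rw [hnorm] at hlocal
        have hΛ2 : (0:ℝ) < Λ^2 := by positivity
        rw [inv_mul_le_iff₀ hΛ2] at hlocal
        linarith [hlocal]
      refine ⟨t, ?_, htIoc.1, le_trans htIoc.2 hmy⟩
      have ht₀S' : ‖φ t₀ - φ 0‖ ≤ Λ^2 * (t₀ * ‖q - p‖) := by
        have := ht₀S
        simp only [hS, Set.mem_setOf_eq] at this
        linarith
      simp only [hS, Set.mem_setOf_eq]
      have htri : ‖φ t - φ 0‖ ≤ ‖φ t - φ t₀‖ + ‖φ t₀ - φ 0‖ := norm_sub_le_norm_sub_add_norm_sub _ _ _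
      nlinarith [htri]
  have h1S := hkey (Set.right_mem_Icc.mpr zero_le_one)
  simp only [hS, Set.mem_setOf_eq] at h1S
  have hφ1 : φ 1 = finv q := by
    show finv (p + (1:ℝ) • (q - p)) = finv q
    rw [one_smul]
    congr 1
    abel_nf
  have hφ0 : φ 0 = finv p := by
    show finv (p + (0:ℝ) • (q - p)) = finv p
    rw [zero_smul, add_zero]
  rw [hφ1, hφ0] at h1S
  rw [norm_sub_rev (finv p), show ‖p - q‖ = ‖q - p‖ from norm_sub_rev _ _]
  linarith



lemma holderIdx_two : holderIdx 2 = 1 := by norm_num [holderIdx]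

/-- Lipschitz continuity of the derivative from the Hölder data. -/
lemma deriv_lip (hd : 0 < d) {HG : ℝ} (hHG : 0 ≤ HG) (f : E → E)
    (hhol : ∀ x ∈ unitCube d, ∀ y ∈ unitCube d,
      ‖iteratedFDerivWithin ℝ 1 f (unitCube d) x - iteratedFDerivWithin ℝ 1 f (unitCube d) y‖
        ≤ HG * min 1 ‖x - y‖) :
    ∀ z ∈ unitCube d, ∀ w ∈ unitCube d,
      ‖fderivWithin ℝ f (unitCube d) z - fderivWithin ℝ f (unitCube d) w‖ ≤ HG * ‖z - w‖ := by
  intro z hz w hw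
  apply ContinuousLinearMap.opNorm_le_bound _ (mul_nonneg hHG (norm_nonneg _))
  intro u
  have hz' := (cube_uniqueDiffOn hd z hz)
  have hw' := (cube_uniqueDiffOn hd w hw)
  have h1 : (fderivWithin ℝ f (unitCube d) z - fderivWithin ℝ f (unitCube d) w) u
      = (iteratedFDerivWithin ℝ 1 f (unitCube d) z
          - iteratedFDerivWithin ℝ 1 f (unitCube d) w) (fun _ => u) := by
    rw [ContinuousLinearMap.sub_apply, ContinuousMultilinearMap.sub_apply, iteratedFDerivWithin_one_apply hz',
      iteratedFDerivWithin_one_apply hw']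
  rw [h1]
  calc ‖(iteratedFDerivWithin ℝ 1 f (unitCube d) z
          - iteratedFDerivWithin ℝ 1 f (unitCube d) w) (fun _ => u)‖
      ≤ ‖iteratedFDerivWithin ℝ 1 f (unitCube d) z
          - iteratedFDerivWithin ℝ 1 f (unitCube d) w‖ * ∏ _i : Fin 1, ‖u‖ :=
        ContinuousMultilinearMap.le_opNorm _ _
    _ = ‖iteratedFDerivWithin ℝ 1 f (unitCube d) z
          - iteratedFDerivWithin ℝ 1 f (unitCube d) w‖ * ‖u‖ := by simp
    _ ≤ (HG * min 1 ‖z - w‖) * ‖u‖ :=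
        mul_le_mul_of_nonneg_right (hhol z hz w hw) (norm_nonneg u)
    _ ≤ (HG * ‖z - w‖) * ‖u‖ := by
        apply mul_le_mul_of_nonneg_right _ (norm_nonneg u)
        exact mul_le_mul_of_nonneg_left (min_le_right _ _) hHG

lemma final_arith (d : ℕ) (hd : 0 < d) (Λ HG M : ℝ) (hΛ : 1 < Λ) (hHG : 0 < HG) (hM : 0 ≤ M) :
    Λ^d * Λ^d * ((d : ℝ) * Λ^(d-1) * (Real.sqrt d * M) * (1 + HG * Λ^2))
      ≤ (d : ℝ) ^ ((2 : ℝ) + (d : ℝ) / 2) * Λ ^ (3 * d) * (1 + HG * Λ * Real.sqrt d) * M := by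
  have hΛ0 : (0:ℝ) < Λ := lt_trans one_pos hΛ
  have hd1 : (1:ℝ) ≤ d := by exact_mod_cast hd
  have hs1 : (1:ℝ) ≤ Real.sqrt d := by
    rw [show (1:ℝ) = Real.sqrt 1 from (Real.sqrt_one).symm]
    exact Real.sqrt_le_sqrt hd1
  have hΛ1 : (1:ℝ) ≤ Λ := hΛ.le
  have h3d : Λ^d * Λ^d * Λ^(d-1) * Λ = Λ^(3*d) := by
    rw [← pow_add, ← pow_add, ← pow_succ]
    congr 1
    omega
  have hstepA : 1 + HG * Λ^2 ≤ Λ * (1 + HG * Λ * Real.sqrt d) := by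
    nlinarith [mul_nonneg (mul_nonneg hHG.le (sq_nonneg Λ)) (sub_nonneg.mpr hs1), hΛ1]
  have hC : (d : ℝ) * Real.sqrt d ≤ (d : ℝ) ^ ((2 : ℝ) + (d : ℝ) / 2) := by
    have hd0 : (0:ℝ) < d := by exact_mod_cast hd
    have h1 : (d : ℝ) * Real.sqrt d = (d : ℝ) ^ ((3:ℝ)/2) := by
      rw [Real.sqrt_eq_rpow]
      rw [show (d:ℝ) * (d:ℝ)^((1:ℝ)/2) = (d:ℝ)^(1:ℝ) * (d:ℝ)^((1:ℝ)/2) by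
        rw [Real.rpow_one]]
      rw [← Real.rpow_add hd0]
      norm_num
    rw [h1]
    apply Real.rpow_le_rpow_of_exponent_le hd1
    linarith [div_nonneg (le_of_lt hd0) (by norm_num : (0:ℝ) ≤ 2)]
  calc Λ^d * Λ^d * ((d : ℝ) * Λ^(d-1) * (Real.sqrt d * M) * (1 + HG * Λ^2))
      = ((d : ℝ) * Real.sqrt d * M) * (Λ^d * Λ^d * Λ^(d-1)) * (1 + HG * Λ^2) := by ring
    _ ≤ ((d : ℝ) * Real.sqrt d * M) * (Λ^d * Λ^d * Λ^(d-1)) * (Λ * (1 + HG * Λ * Real.sqrt d)) := by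
        apply mul_le_mul_of_nonneg_left hstepA
        positivity
    _ = ((d : ℝ) * Real.sqrt d) * M * Λ^(3*d) * (1 + HG * Λ * Real.sqrt d) := by
        rw [← h3d]; ring
    _ ≤ ((d : ℝ) ^ ((2 : ℝ) + (d : ℝ) / 2)) * M * Λ^(3*d) * (1 + HG * Λ * Real.sqrt d) := by
        have hfac : (0:ℝ) ≤ M * Λ^(3*d) * (1 + HG * Λ * Real.sqrt d) := by positivity
        nlinarith [hC, hfac, mul_le_mul_of_nonneg_right hC hfac]
    _ = (d : ℝ) ^ ((2 : ℝ) + (d : ℝ) / 2) * Λ ^ (3 * d) * (1 + HG * Λ * Real.sqrt d) * M := by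
        ring

/-- Stability of the transported densities: if `g_u, g_v` are bijective generators
in `H²_Λ([0,1]^d, H_G)` mapping the cube to itself, with densities
`p_w(x) = |det ∇g_w(g_w⁻¹(x))|⁻¹`, then
`‖p_u - p_v‖_{L_∞} ≤ d^{2+d/2} Λ^{3d} (1 + H_G Λ √d) ‖g_u - g_v‖_{H¹}`.
The `H¹`-norm bound `‖g_u - g_v‖_{H¹} ≤ M` is expressed entrywise: all
coordinates of `g_u - g_v` and all first partial derivatives are bounded by `M`
on the cube. -/
theorem statement_10 (d : ℕ) (hd : 0 < d) (Λ HG : ℝ) (hΛ : 1 < Λ) (hHG : 0 < HG)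
    (gu gv guInv gvInv :
      EuclideanSpace ℝ (Fin d) → EuclideanSpace ℝ (Fin d))
    (hgu : HolderBallRegMem 2 HG Λ (unitCube d) gu)
    (hgv : HolderBallRegMem 2 HG Λ (unitCube d) gv)
    (hguMap : Set.MapsTo gu (unitCube d) (unitCube d))
    (hgvMap : Set.MapsTo gv (unitCube d) (unitCube d))
    (hguInvMap : Set.MapsTo guInv (unitCube d) (unitCube d))
    (hgvInvMap : Set.MapsTo gvInv (unitCube d) (unitCube d))
    (hguL : ∀ x ∈ unitCube d, gu (guInv x) = x)
    (hguR : ∀ y ∈ unitCube d, guInv (gu y) = y)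
    (hgvL : ∀ x ∈ unitCube d, gv (gvInv x) = x)
    (hgvR : ∀ y ∈ unitCube d, gvInv (gv y) = y)
    (M : ℝ) (hM0 : 0 ≤ M)
    -- `‖g_u - g_v‖_{H¹([0,1]^d)} ≤ M`, entrywise
    (hMval : ∀ x ∈ unitCube d, ∀ i, |gu x i - gv x i| ≤ M)
    (hMder : ∀ x ∈ unitCube d, ∀ i j,
      |fderivWithin ℝ gu (unitCube d) x (EuclideanSpace.single j 1) i
        - fderivWithin ℝ gv (unitCube d) x (EuclideanSpace.single j 1) i| ≤ M)
    (x : EuclideanSpace ℝ (Fin d)) (hx : x ∈ unitCube d) :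
    |(|LinearMap.det ((fderivWithin ℝ gu (unitCube d) (guInv x)).toLinearMap)|⁻¹)
      - (|LinearMap.det
          ((fderivWithin ℝ gv (unitCube d) (gvInv x)).toLinearMap)|⁻¹)| ≤
      (d : ℝ) ^ ((2 : ℝ) + (d : ℝ) / 2) * Λ ^ (3 * d)
        * (1 + HG * Λ * Real.sqrt d) * M := by
  have hΛ0 : (0:ℝ) < Λ := lt_trans one_pos hΛ
  obtain ⟨⟨hgu_s, hgu_b, hgu_h⟩, hgu_r⟩ := hgu
  obtain ⟨⟨hgv_s, hgv_b, hgv_h⟩, hgv_r⟩ := hgv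
  have ha : guInv x ∈ unitCube d := hguInvMap hx
  have hb : gvInv x ∈ unitCube d := hgvInvMap hx
  set a := guInv x with hadef
  set b := gvInv x with hbdef
  set A := fderivWithin ℝ gu (unitCube d) a with hA
  set Ba := fderivWithin ℝ gv (unitCube d) a with hBa
  set Bb := fderivWithin ℝ gv (unitCube d) b with hBb
  -- Hölder data in usable form
  have hgu_h' : ∀ z ∈ unitCube d, ∀ w ∈ unitCube d,
      ‖iteratedFDerivWithin ℝ 1 gu (unitCube d) z - iteratedFDerivWithin ℝ 1 gu (unitCube d) w‖
        ≤ HG * min 1 ‖z - w‖ := by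
    intro z hz w hw
    have h := hgu_h z hz w hw
    rwa [holderIdx_two, show (2:ℝ) - ((1:ℕ):ℝ) = 1 by norm_num, Real.rpow_one] at h
  have hgv_h' : ∀ z ∈ unitCube d, ∀ w ∈ unitCube d,
      ‖iteratedFDerivWithin ℝ 1 gv (unitCube d) z - iteratedFDerivWithin ℝ 1 gv (unitCube d) w‖
        ≤ HG * min 1 ‖z - w‖ := by
    intro z hz w hw
    have h := hgv_h z hz w hw
    rwa [holderIdx_two, show (2:ℝ) - ((1:ℕ):ℝ) = 1 by norm_num, Real.rpow_one] at h
  have hulip := deriv_lip hd hHG.le gu hgu_h'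
  have hvlip := deriv_lip hd hHG.le gv hgv_h'
  have hgu_s1 : ContDiffOn ℝ 1 gu (unitCube d) := by
    have := hgu_s; rwa [holderIdx_two] at this
  have hdiffu : DifferentiableOn ℝ gu (unitCube d) :=
    hgu_s1.differentiableOn (by norm_num)
  have hcontu : ContinuousOn gu (unitCube d) := hgu_s1.continuousOn
  have hulow : ∀ z ∈ unitCube d, ∀ u : EuclideanSpace ℝ (Fin d),
      Λ⁻¹ * ‖u‖ ≤ ‖fderivWithin ℝ gu (unitCube d) z u‖ := fun z hz u => (hgu_r z hz u).1
  -- bound on ‖a - b‖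
  have hr : gu b ∈ unitCube d := hguMap hb
  have hxr : ‖x - gu b‖ ≤ Real.sqrt d * M := by
    have hxb : x = gv b := (hgvL x hx).symm
    apply norm_le_sqrt_card _ M hM0
    intro i
    have h1 : (x - gu b) i = gv b i - gu b i := by rw [hxb]; rfl
    rw [h1, abs_sub_comm]
    exact hMval b hb i
  have hab : ‖a - b‖ ≤ Λ^2 * (Real.sqrt d * M) := by
    have h1 : b = guInv (gu b) := (hguR b hb).symm
    have h2 := inv_lipschitz hΛ hHG gu guInv hdiffu hcontu hulow hulip hguMap hguInvMap
      hguL hguR x hx (gu b) hr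
    rw [← h1] at h2
    calc ‖a - b‖ ≤ Λ^2 * ‖x - gu b‖ := h2
      _ ≤ Λ^2 * (Real.sqrt d * M) := mul_le_mul_of_nonneg_left hxr (by positivity)
  -- matrices
  set MA := matOf A.toLinearMap with hMA
  set MVa := matOf Ba.toLinearMap with hMVa
  set MVb := matOf Bb.toLinearMap with hMVb
  have hcolA : ∀ j, Real.sqrt (∑ i, MA i j ^ 2) ≤ Λ := by
    intro j
    rw [hMA, col_norm_eq]
    have h := (hgu_r a ha (EuclideanSpace.single j 1)).2
    simpa [EuclideanSpace.norm_single] using h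
  have hcolVa : ∀ j, Real.sqrt (∑ i, MVa i j ^ 2) ≤ Λ := by
    intro j
    rw [hMVa, col_norm_eq]
    have h := (hgv_r a ha (EuclideanSpace.single j 1)).2
    simpa [EuclideanSpace.norm_single] using h
  have hcolVb : ∀ j, Real.sqrt (∑ i, MVb i j ^ 2) ≤ Λ := by
    intro j
    rw [hMVb, col_norm_eq]
    have h := (hgv_r b hb (EuclideanSpace.single j 1)).2
    simpa [EuclideanSpace.norm_single] using h
  have hdiff1 : ∀ j, Real.sqrt (∑ i, (MA i j - MVa i j) ^ 2) ≤ Real.sqrt d * M := by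
    intro j
    apply sqrt_sum_sq_le _ _ hM0
    intro i
    exact hMder a ha i j
  have hBaBb : ‖Ba - Bb‖ ≤ HG * ‖a - b‖ := hvlip a ha b hb
  have hdiff2 : ∀ j, Real.sqrt (∑ i, (MVa i j - MVb i j) ^ 2)
      ≤ HG * (Λ^2 * (Real.sqrt d * M)) := by
    intro j
    have heq : Real.sqrt (∑ i, (MVa i j - MVb i j) ^ 2)
        = ‖(Ba - Bb) (EuclideanSpace.single j 1)‖ := by
      rw [EuclideanSpace.norm_eq]
      congr 1
      refine Finset.sum_congr rfl fun i _ => ?_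
      rw [Real.norm_eq_abs, sq_abs]
      rfl
    rw [heq]
    calc ‖(Ba - Bb) (EuclideanSpace.single j 1)‖
        ≤ ‖Ba - Bb‖ * ‖EuclideanSpace.single j (1:ℝ)‖ := ContinuousLinearMap.le_opNorm _ _
      _ = ‖Ba - Bb‖ := by rw [EuclideanSpace.norm_single, norm_one, mul_one]
      _ ≤ HG * ‖a - b‖ := hBaBb
      _ ≤ HG * (Λ^2 * (Real.sqrt d * M)) := mul_le_mul_of_nonneg_left hab hHG.le
  have hT1 : |MA.det - MVa.det| ≤ d * Λ^(d-1) * (Real.sqrt d * M) :=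
    det_sub_le MA MVa Λ (Real.sqrt d * M) hcolA hcolVa hdiff1
  have hT2 : |MVa.det - MVb.det| ≤ d * Λ^(d-1) * (HG * (Λ^2 * (Real.sqrt d * M))) :=
    det_sub_le MVa MVb Λ _ hcolVa hcolVb hdiff2
  -- lower bounds on determinants
  have hlowA : (Λ^d)⁻¹ ≤ |LinearMap.det A.toLinearMap| :=
    det_lower hΛ0 A (fun u => (hgu_r a ha u).1)
  have hlowB : (Λ^d)⁻¹ ≤ |LinearMap.det Bb.toLinearMap| :=
    det_lower hΛ0 Bb (fun u => (hgv_r b hb u).1)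
  set u := |LinearMap.det A.toLinearMap| with hu
  set v := |LinearMap.det Bb.toLinearMap| with hv
  have hupos : 0 < u := lt_of_lt_of_le (by positivity) hlowA
  have hvpos : 0 < v := lt_of_lt_of_le (by positivity) hlowB
  have huinv : u⁻¹ ≤ Λ^d := by
    rw [inv_le_iff_one_le_mul₀ hupos]
    calc (1:ℝ) = Λ^d * (Λ^d)⁻¹ := by
          rw [mul_inv_cancel₀ (by positivity)]
      _ ≤ Λ^d * u := mul_le_mul_of_nonneg_left hlowA (by positivity)
  have hvinv : v⁻¹ ≤ Λ^d := by
    rw [inv_le_iff_one_le_mul₀ hvpos]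
    calc (1:ℝ) = Λ^d * (Λ^d)⁻¹ := by
          rw [mul_inv_cancel₀ (by positivity)]
      _ ≤ Λ^d * v := mul_le_mul_of_nonneg_left hlowB (by positivity)
  have hdets : |LinearMap.det A.toLinearMap - LinearMap.det Bb.toLinearMap|
      ≤ d * Λ^(d-1) * (Real.sqrt d * M) + d * Λ^(d-1) * (HG * (Λ^2 * (Real.sqrt d * M))) := by
    rw [← matOf_det, ← matOf_det, ← hMA, ← hMVb]
    calc |MA.det - MVb.det| ≤ |MA.det - MVa.det| + |MVa.det - MVb.det| := abs_sub_le _ _ _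
      _ ≤ _ := add_le_add hT1 hT2
  have hkey : |u⁻¹ - v⁻¹| ≤ Λ^d * Λ^d
      * |LinearMap.det A.toLinearMap - LinearMap.det Bb.toLinearMap| := by
    have heq : u⁻¹ - v⁻¹ = (v - u) * (u⁻¹ * v⁻¹) := by
      field_simp
    rw [heq, abs_mul]
    have h1 : |u⁻¹ * v⁻¹| = u⁻¹ * v⁻¹ :=
      abs_of_nonneg (by positivity)
    rw [h1]
    have h2 : |v - u| ≤ |LinearMap.det A.toLinearMap - LinearMap.det Bb.toLinearMap| := by
      rw [abs_sub_comm, hu, hv]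
      exact abs_abs_sub_abs_le_abs_sub _ _
    calc |v - u| * (u⁻¹ * v⁻¹)
        ≤ |LinearMap.det A.toLinearMap - LinearMap.det Bb.toLinearMap| * (Λ^d * Λ^d) := by
          apply mul_le_mul h2 _ (by positivity) (abs_nonneg _)
          exact mul_le_mul huinv hvinv (by positivity) (by positivity)
      _ = Λ^d * Λ^d * |LinearMap.det A.toLinearMap - LinearMap.det Bb.toLinearMap| := by ring
  calc |u⁻¹ - v⁻¹|
      ≤ Λ^d * Λ^d * |LinearMap.det A.toLinearMap - LinearMap.det Bb.toLinearMap| := hkey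
    _ ≤ Λ^d * Λ^d * (d * Λ^(d-1) * (Real.sqrt d * M)
          + d * Λ^(d-1) * (HG * (Λ^2 * (Real.sqrt d * M)))) :=
        mul_le_mul_of_nonneg_left hdets (by positivity)
    _ = Λ^d * Λ^d * ((d : ℝ) * Λ^(d-1) * (Real.sqrt d * M) * (1 + HG * Λ^2)) := by ring
    _ ≤ (d : ℝ) ^ ((2 : ℝ) + (d : ℝ) / 2) * Λ ^ (3 * d) * (1 + HG * Λ * Real.sqrt d) * M :=
        final_arith d hd Λ HG M hΛ hHG hM0
end

section
/- Let N ∈ ℕ and fix an architecture A = (p_0, p_1, …, p_{N+1}) ∈ ℕ^{N+2}. Let W_i^{(1)}, W_i^{(2)} ∈ [−1,1]^{p_{i+1}×p_i} for 0 ≤ i ≤ N and v_i^{(1)}, v_i^{(2)} ∈ [−1,1]^{p_i} for 1 ≤ i ≤ N satisfy ‖W_i^{(1)} − W_i^{(2)}‖_∞ ≤ ε for all i and ‖v_i^{(1)} − v_i^{(2)}‖_∞ ≤ ε for all i. Then the ReQU neural networks f^{(1)} = W_N^{(1)} ∘ σ_{v_N^{(1)}} ∘ ⋯ ∘ σ_{v_1^{(1)}}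 ∘ W_0^{(1)} and f^{(2)} = W_N^{(2)} ∘ σ_{v_N^{(2)}} ∘ ⋯ ∘ σ_{v_1^{(2)}} ∘ W_0^{(2)} satisfy ‖f^{(1)}(x) − f^{(2)}(x)‖_∞ ≤ ε (N+1) 2^N ∏_{ℓ=0}^{N} (p_ℓ + 1)^{2^N} for all x ∈ [0,1]^{p_0}. -/
/-- The ReQU activation function `σ(t) = (max(t,0))²`. -/
noncomputable def σReQU (t : ℝ) : ℝ := (max t 0) ^ 2

/-- The hidden-layer evaluation of a feed-forward ReQU network with architecture
`p : ℕ → ℕ`, weight matrices `W i : ℝ^{p(i+1) × p(i)}` and shift vectors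
`v i : ℝ^{p i}`: `hiddenNN p W v k = σ_{v_k} ∘ W_{k-1} ∘ ⋯ ∘ σ_{v_1} ∘ W_0`. -/
noncomputable def hiddenNN (p : ℕ → ℕ)
    (W : (i : ℕ) → Fin (p (i + 1)) → Fin (p i) → ℝ)
    (v : (i : ℕ) → Fin (p i) → ℝ) :
    (k : ℕ) → (Fin (p 0) → ℝ) → Fin (p k) → ℝ
  | 0, x => x
  | k + 1, x => fun j => σReQU ((∑ l, W k j l * hiddenNN p W v k x l) - v (k + 1) j)

/-- Full network evaluation
`evalNN p W v N = W_N ∘ σ_{v_N} ∘ W_{N-1} ∘ ⋯ ∘ σ_{v_1} ∘ W_0`,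
i.e. a network of depth `N+1` with architecture `(p 0, …, p (N+1))`. -/
noncomputable def evalNN (p : ℕ → ℕ)
    (W : (i : ℕ) → Fin (p (i + 1)) → Fin (p i) → ℝ)
    (v : (i : ℕ) → Fin (p i) → ℝ) (N : ℕ)
    (x : Fin (p 0) → ℝ) : Fin (p (N + 1)) → ℝ :=
  fun j => ∑ l, W N j l * hiddenNN p W v N x l

lemma σ_nonneg (t : ℝ) : 0 ≤ σReQU t := sq_nonneg _

lemma σ_le (t c : ℝ) (h : |t| ≤ c) : σReQU t ≤ c ^ 2 := by
  have h1 : max t 0 ≤ c := max_le (le_trans (le_abs_self t) h) (le_trans (abs_nonneg t) h)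
  have h0 : 0 ≤ max t 0 := le_max_right _ _
  show (max t 0) ^ 2 ≤ c ^ 2
  nlinarith

lemma σ_diff (a b : ℝ) : |σReQU a - σReQU b| ≤ (|a| + |b|) * |a - b| := by
  have hmax : |max a 0 - max b 0| ≤ |a - b| := abs_max_sub_max_le_abs a b 0
  have ha : max a 0 ≤ |a| := max_le (le_abs_self a) (abs_nonneg a)
  have hb : max b 0 ≤ |b| := max_le (le_abs_self b) (abs_nonneg b)
  have ha0 : 0 ≤ max a 0 := le_max_right _ _
  have hb0 : 0 ≤ max b 0 := le_max_right _ _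
  have : σReQU a - σReQU b = (max a 0 + max b 0) * (max a 0 - max b 0) := by
    simp only [σReQU]; ring
  rw [this, abs_mul, abs_of_nonneg (by linarith)]
  exact mul_le_mul (by linarith) hmax (abs_nonneg _) (by positivity)

/-- Recursive bound on hidden-layer magnitudes. -/
noncomputable def Bb (p : ℕ → ℕ) : ℕ → ℝ
  | 0 => 1
  | k + 1 => (((p k : ℝ) + 1) * Bb p k) ^ 2

lemma Bb_ge_one (p : ℕ → ℕ) : ∀ k, 1 ≤ Bb p k := by
  intro k
  induction k with
  | zero => simp [Bb]
  | succ k ih =>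
    have hp : (1 : ℝ) ≤ (p k : ℝ) + 1 := le_add_of_nonneg_left (Nat.cast_nonneg _)
    have h1 : (1:ℝ) ≤ ((p k : ℝ) + 1) * Bb p k :=
      le_trans (by norm_num) (mul_le_mul hp ih zero_le_one (by positivity))
    show (1:ℝ) ≤ (((p k : ℝ) + 1) * Bb p k) ^ 2
    nlinarith

lemma sum_bound {n : ℕ} (f : Fin n → ℝ) (c : ℝ) (hf : ∀ l, |f l| ≤ c) :
    |∑ l, f l| ≤ (n : ℝ) * c := by
  calc |∑ l, f l| ≤ ∑ l, |f l| := Finset.abs_sum_le_sum_abs _ _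
    _ ≤ ∑ _l : Fin n, c := Finset.sum_le_sum fun l _ => hf l
    _ = (n : ℝ) * c := by simp [Finset.sum_const, Finset.card_univ, nsmul_eq_mul]

lemma key_ineq (P B T K ε : ℝ) (hP : 0 ≤ P) (hB : 1 ≤ B) (hT : 1 ≤ T) (hK : 0 ≤ K)
    (hε : 0 ≤ ε) :
    (2 * ((P + 1) * B)) * (P * (ε * B + ε * K * T * B) + ε)
      ≤ ε * (K + 1) * (2 * T) * ((P + 1) * B) ^ 2 := by
  have hKT : 0 ≤ K * T := mul_nonneg hK (by linarith)
  have h1 : P * (ε * B + ε * K * T * B) + ε ≤ ε * ((P + 1) * B * (1 + K * T)) := by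
    have hb1 : (1:ℝ) ≤ B * (1 + K * T) := by nlinarith [mul_nonneg (le_trans zero_le_one hB) hKT]
    nlinarith [mul_nonneg hε (sub_nonneg.2 hb1)]
  have h2 : (0:ℝ) ≤ 2 * ((P + 1) * B) := by positivity
  calc (2 * ((P + 1) * B)) * (P * (ε * B + ε * K * T * B) + ε)
      ≤ (2 * ((P + 1) * B)) * (ε * ((P + 1) * B * (1 + K * T))) :=
        mul_le_mul_of_nonneg_left h1 h2
    _ = ε * (1 + K * T) * 2 * ((P + 1) * B) ^ 2 := by ring
    _ ≤ ε * (K + 1) * (2 * T) * ((P + 1) * B) ^ 2 := by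
        have h3 : (1 + K * T) ≤ (K + 1) * T := by nlinarith
        nlinarith [mul_nonneg (mul_nonneg hε (sub_nonneg.2 h3)) (sq_nonneg ((P + 1) * B))]

lemma hidden_bound (N : ℕ) (p : ℕ → ℕ)
    (W : (i : ℕ) → Fin (p (i + 1)) → Fin (p i) → ℝ)
    (v : (i : ℕ) → Fin (p i) → ℝ)
    (hW : ∀ i, i ≤ N → ∀ j l, |W i j l| ≤ 1)
    (hv : ∀ i, 1 ≤ i → i ≤ N → ∀ j, |v i j| ≤ 1)
    (x : Fin (p 0) → ℝ) (hx : ∀ k, |x k| ≤ 1) :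
    ∀ k, k ≤ N → ∀ j, |hiddenNN p W v k x j| ≤ Bb p k := by
  intro k
  induction k with
  | zero => intro _ j; simpa [hiddenNN, Bb] using hx j
  | succ k ih =>
    intro hk j
    have hk' : k ≤ N := Nat.le_of_succ_le hk
    have hB := Bb_ge_one p k
    have hsum : |∑ l, W k j l * hiddenNN p W v k x l| ≤ (p k : ℝ) * Bb p k := by
      refine sum_bound _ _ fun l => ?_
      rw [abs_mul]
      calc |W k j l| * |hiddenNN p W v k x l| ≤ 1 * Bb p k :=
            mul_le_mul (hW k hk' j l) (ih hk' l) (abs_nonneg _) zero_le_one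
        _ = Bb p k := one_mul _
    have hv' : |v (k+1) j| ≤ 1 := hv (k+1) (Nat.succ_le_succ (Nat.zero_le _)) hk j
    have hpre : |(∑ l, W k j l * hiddenNN p W v k x l) - v (k+1) j|
        ≤ ((p k : ℝ) + 1) * Bb p k := by
      have := abs_sub (∑ l, W k j l * hiddenNN p W v k x l) (v (k+1) j)
      have hp0 : (0:ℝ) ≤ (p k : ℝ) := Nat.cast_nonneg _
      nlinarith
    show |σReQU ((∑ l, W k j l * hiddenNN p W v k x l) - v (k+1) j)| ≤ Bb p (k+1)
    rw [abs_of_nonneg (σ_nonneg _)]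
    exact σ_le _ _ hpre

lemma Bb_le_prod (p : ℕ → ℕ) :
    ∀ k, Bb p k ≤ ∏ l ∈ Finset.range k, ((p l : ℝ) + 1) ^ (2 ^ k) := by
  intro k
  induction k with
  | zero => simp [Bb]
  | succ k ih =>
    have hone : ∀ l, (1:ℝ) ≤ (p l : ℝ) + 1 := fun l => le_add_of_nonneg_left (Nat.cast_nonneg _)
    have hBnn : (0:ℝ) ≤ Bb p k := le_trans zero_le_one (Bb_ge_one p k)
    calc Bb p (k+1) = (((p k : ℝ) + 1) * Bb p k) ^ 2 := rfl
      _ = ((p k : ℝ) + 1) ^ 2 * (Bb p k) ^ 2 := by ring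
      _ ≤ ((p k : ℝ) + 1) ^ (2 ^ (k+1)) *
            (∏ l ∈ Finset.range k, ((p l : ℝ) + 1) ^ (2 ^ k)) ^ 2 := by
          have e1 : ((p k : ℝ) + 1) ^ 2 ≤ ((p k : ℝ) + 1) ^ (2 ^ (k+1)) :=
            pow_le_pow_right₀ (hone k) (by
              have := Nat.one_le_two_pow (n := k)
              calc 2 = 2 * 1 := by ring
                _ ≤ 2 * 2 ^ k := by omega
                _ = 2 ^ (k+1) := by rw [pow_succ]; ring)
          have e2 : (Bb p k) ^ 2 ≤ (∏ l ∈ Finset.range k, ((p l : ℝ) + 1) ^ (2 ^ k)) ^ 2 :=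
            pow_le_pow_left₀ hBnn ih 2
          exact mul_le_mul e1 e2 (by positivity) (by positivity)
      _ = ∏ l ∈ Finset.range (k+1), ((p l : ℝ) + 1) ^ (2 ^ (k+1)) := by
          rw [Finset.prod_range_succ, ← Finset.prod_pow]
          have : ∀ l, (((p l : ℝ) + 1) ^ (2 ^ k)) ^ 2 = ((p l : ℝ) + 1) ^ (2 ^ (k+1)) := by
            intro l; rw [← pow_mul, pow_succ]
          simp_rw [this]
          ring

lemma hidden_diff (N : ℕ) (p : ℕ → ℕ) (ε : ℝ) (hε : 0 ≤ ε)
    (W1 W2 : (i : ℕ) → Fin (p (i + 1)) → Fin (p i) → ℝ)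
    (v1 v2 : (i : ℕ) → Fin (p i) → ℝ)
    (hW1 : ∀ i, i ≤ N → ∀ j l, |W1 i j l| ≤ 1)
    (hW2 : ∀ i, i ≤ N → ∀ j l, |W2 i j l| ≤ 1)
    (hv1 : ∀ i, 1 ≤ i → i ≤ N → ∀ j, |v1 i j| ≤ 1)
    (hv2 : ∀ i, 1 ≤ i → i ≤ N → ∀ j, |v2 i j| ≤ 1)
    (hWd : ∀ i, i ≤ N → ∀ j l, |W1 i j l - W2 i j l| ≤ ε)
    (hvd : ∀ i, 1 ≤ i → i ≤ N → ∀ j, |v1 i j - v2 i j| ≤ ε)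
    (x : Fin (p 0) → ℝ) (hx : ∀ k, |x k| ≤ 1) :
    ∀ k, k ≤ N → ∀ j, |hiddenNN p W1 v1 k x j - hiddenNN p W2 v2 k x j|
      ≤ ε * k * 2 ^ k * Bb p k := by
  intro k
  induction k with
  | zero => intro _ j; simp [hiddenNN]
  | succ k ih =>
    intro hk j
    have hk' : k ≤ N := Nat.le_of_succ_le hk
    have hB : (1:ℝ) ≤ Bb p k := Bb_ge_one p k
    have hBnn : (0:ℝ) ≤ Bb p k := le_trans zero_le_one hB
    have hp0 : (0:ℝ) ≤ (p k : ℝ) := Nat.cast_nonneg _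
    have h1B := hidden_bound N p W1 v1 hW1 hv1 x hx k hk'
    have h2B := hidden_bound N p W2 v2 hW2 hv2 x hx k hk'
    set D : ℝ := ε * k * 2 ^ k * Bb p k with hD
    have hDnn : 0 ≤ D := by positivity
    set a : ℝ := (∑ l, W1 k j l * hiddenNN p W1 v1 k x l) - v1 (k+1) j with ha_def
    set b : ℝ := (∑ l, W2 k j l * hiddenNN p W2 v2 k x l) - v2 (k+1) j with hb_def
    have hsucc : 1 ≤ k + 1 := Nat.succ_le_succ (Nat.zero_le _)
    -- bound on |a| and |b|
    have habs : ∀ (W : (i : ℕ) → Fin (p (i + 1)) → Fin (p i) → ℝ)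
        (v : (i : ℕ) → Fin (p i) → ℝ),
        (∀ j l, |W k j l| ≤ 1) → (|v (k+1) j| ≤ 1) →
        (∀ l, |hiddenNN p W v k x l| ≤ Bb p k) →
        |(∑ l, W k j l * hiddenNN p W v k x l) - v (k+1) j| ≤ ((p k : ℝ) + 1) * Bb p k := by
      intro W v hW hv hh
      have hsum : |∑ l, W k j l * hiddenNN p W v k x l| ≤ (p k : ℝ) * Bb p k := by
        refine sum_bound _ _ fun l => ?_
        rw [abs_mul]
        calc |W k j l| * |hiddenNN p W v k x l| ≤ 1 * Bb p k :=
              mul_le_mul (hW j l) (hh l) (abs_nonneg _) zero_le_one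
          _ = Bb p k := one_mul _
      have := abs_sub (∑ l, W k j l * hiddenNN p W v k x l) (v (k+1) j)
      nlinarith
    have haa : |a| ≤ ((p k : ℝ) + 1) * Bb p k :=
      habs W1 v1 (hW1 k hk') (hv1 (k+1) hsucc hk j) h1B
    have hbb : |b| ≤ ((p k : ℝ) + 1) * Bb p k :=
      habs W2 v2 (hW2 k hk') (hv2 (k+1) hsucc hk j) h2B
    -- bound on |a - b|
    have hab : |a - b| ≤ (p k : ℝ) * (ε * Bb p k + D) + ε := by
      have hsd : |∑ l, W1 k j l * hiddenNN p W1 v1 k x l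
          - ∑ l, W2 k j l * hiddenNN p W2 v2 k x l| ≤ (p k : ℝ) * (ε * Bb p k + D) := by
        rw [← Finset.sum_sub_distrib]
        refine sum_bound _ _ fun l => ?_
        have heq : W1 k j l * hiddenNN p W1 v1 k x l - W2 k j l * hiddenNN p W2 v2 k x l
            = (W1 k j l - W2 k j l) * hiddenNN p W1 v1 k x l
              + W2 k j l * (hiddenNN p W1 v1 k x l - hiddenNN p W2 v2 k x l) := by ring
        rw [heq]
        calc |(W1 k j l - W2 k j l) * hiddenNN p W1 v1 k x l
              + W2 k j l * (hiddenNN p W1 v1 k x l - hiddenNN p W2 v2 k x l)|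
            ≤ |(W1 k j l - W2 k j l) * hiddenNN p W1 v1 k x l|
              + |W2 k j l * (hiddenNN p W1 v1 k x l - hiddenNN p W2 v2 k x l)| := abs_add_le _ _
          _ ≤ ε * Bb p k + 1 * D := by
              gcongr
              · rw [abs_mul]
                exact mul_le_mul (hWd k hk' j l) (h1B l) (abs_nonneg _) hε
              · rw [abs_mul]
                exact mul_le_mul (hW2 k hk' j l) (ih hk' l) (abs_nonneg _) zero_le_one
          _ = ε * Bb p k + D := by ring
      have hvv : |v1 (k+1) j - v2 (k+1) j| ≤ ε := hvd (k+1) hsucc hk j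
      calc |a - b| = |(∑ l, W1 k j l * hiddenNN p W1 v1 k x l
              - ∑ l, W2 k j l * hiddenNN p W2 v2 k x l) - (v1 (k+1) j - v2 (k+1) j)| := by
            rw [ha_def, hb_def]; ring_nf
        _ ≤ |∑ l, W1 k j l * hiddenNN p W1 v1 k x l
              - ∑ l, W2 k j l * hiddenNN p W2 v2 k x l| + |v1 (k+1) j - v2 (k+1) j| :=
            abs_sub _ _
        _ ≤ (p k : ℝ) * (ε * Bb p k + D) + ε := by linarith
    -- combine
    have hstep : |σReQU a - σReQU b| ≤ ε * ((k:ℝ) + 1) * (2 * 2 ^ k) * (((p k : ℝ) + 1) * Bb p k) ^ 2 := by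
      calc |σReQU a - σReQU b| ≤ (|a| + |b|) * |a - b| := σ_diff a b
        _ ≤ (2 * (((p k : ℝ) + 1) * Bb p k)) * ((p k : ℝ) * (ε * Bb p k + D) + ε) := by
            have h1 : 0 ≤ |a| + |b| := by positivity
            have h2 : |a| + |b| ≤ 2 * (((p k : ℝ) + 1) * Bb p k) := by linarith
            exact mul_le_mul h2 hab (abs_nonneg _) (by positivity)
        _ = (2 * (((p k : ℝ) + 1) * Bb p k))
              * ((p k : ℝ) * (ε * Bb p k + ε * (k:ℝ) * 2 ^ k * Bb p k) + ε) := by rw [hD]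
        _ ≤ ε * ((k:ℝ) + 1) * (2 * 2 ^ k) * (((p k : ℝ) + 1) * Bb p k) ^ 2 :=
            key_ineq (p k) (Bb p k) (2 ^ k) (k:ℝ) ε hp0 hB (one_le_pow₀ (by norm_num)) (Nat.cast_nonneg _) hε
    show |σReQU a - σReQU b| ≤ ε * (k+1 : ℕ) * 2 ^ (k+1) * Bb p (k+1)
    have hcast : ((k+1 : ℕ) : ℝ) = (k : ℝ) + 1 := by push_cast; ring
    have hBb : Bb p (k+1) = (((p k : ℝ) + 1) * Bb p k) ^ 2 := rfl
    rw [hcast, hBb, pow_succ]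
    calc |σReQU a - σReQU b|
        ≤ ε * ((k:ℝ) + 1) * (2 * 2 ^ k) * (((p k : ℝ) + 1) * Bb p k) ^ 2 := hstep
      _ = ε * ((k:ℝ) + 1) * ((2:ℝ) ^ k * 2) * (((p k : ℝ) + 1) * Bb p k) ^ 2 := by ring

/-- Perturbation bound for ReQU networks: if all weights and shifts lie in `[-1,1]`
and corresponding parameters of two networks differ by at most `ε` entrywise, then
`‖f⁽¹⁾(x) - f⁽²⁾(x)‖_∞ ≤ ε (N+1) 2^N ∏_{ℓ=0}^N (p_ℓ + 1)^{2^N}` for `x ∈ [0,1]^{p₀}`. -/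
theorem statement_11 (N : ℕ) (p : ℕ → ℕ) (ε : ℝ) (hε : 0 ≤ ε)
    (W1 W2 : (i : ℕ) → Fin (p (i + 1)) → Fin (p i) → ℝ)
    (v1 v2 : (i : ℕ) → Fin (p i) → ℝ)
    (hW1 : ∀ i, i ≤ N → ∀ j l, |W1 i j l| ≤ 1)
    (hW2 : ∀ i, i ≤ N → ∀ j l, |W2 i j l| ≤ 1)
    (hv1 : ∀ i, 1 ≤ i → i ≤ N → ∀ j, |v1 i j| ≤ 1)
    (hv2 : ∀ i, 1 ≤ i → i ≤ N → ∀ j, |v2 i j| ≤ 1)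
    (hWd : ∀ i, i ≤ N → ∀ j l, |W1 i j l - W2 i j l| ≤ ε)
    (hvd : ∀ i, 1 ≤ i → i ≤ N → ∀ j, |v1 i j - v2 i j| ≤ ε)
    (x : Fin (p 0) → ℝ) (hx : ∀ k, x k ∈ Set.Icc (0 : ℝ) 1) :
    ∀ j, |evalNN p W1 v1 N x j - evalNN p W2 v2 N x j| ≤
      ε * (N + 1) * 2 ^ N * ∏ l ∈ Finset.range (N + 1), ((p l : ℝ) + 1) ^ (2 ^ N) := by
  intro j
  have hx' : ∀ k, |x k| ≤ 1 := fun k => abs_le.2 ⟨by linarith [(hx k).1], (hx k).2⟩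
  have hB : (1:ℝ) ≤ Bb p N := Bb_ge_one p N
  have hBnn : (0:ℝ) ≤ Bb p N := le_trans zero_le_one hB
  have hp0 : (0:ℝ) ≤ (p N : ℝ) := Nat.cast_nonneg _
  have h1B := hidden_bound N p W1 v1 hW1 hv1 x hx' N le_rfl
  have h2B := hidden_bound N p W2 v2 hW2 hv2 x hx' N le_rfl
  have hdiff := hidden_diff N p ε hε W1 W2 v1 v2 hW1 hW2 hv1 hv2 hWd hvd x hx' N le_rfl
  set D : ℝ := ε * N * 2 ^ N * Bb p N with hD
  have hsum : |evalNN p W1 v1 N x j - evalNN p W2 v2 N x j|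
      ≤ (p N : ℝ) * (ε * Bb p N + D) := by
    show |(∑ l, W1 N j l * hiddenNN p W1 v1 N x l)
        - ∑ l, W2 N j l * hiddenNN p W2 v2 N x l| ≤ _
    rw [← Finset.sum_sub_distrib]
    refine sum_bound _ _ fun l => ?_
    have heq : W1 N j l * hiddenNN p W1 v1 N x l - W2 N j l * hiddenNN p W2 v2 N x l
        = (W1 N j l - W2 N j l) * hiddenNN p W1 v1 N x l
          + W2 N j l * (hiddenNN p W1 v1 N x l - hiddenNN p W2 v2 N x l) := by ring
    rw [heq]
    calc |(W1 N j l - W2 N j l) * hiddenNN p W1 v1 N x l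
          + W2 N j l * (hiddenNN p W1 v1 N x l - hiddenNN p W2 v2 N x l)|
        ≤ |(W1 N j l - W2 N j l) * hiddenNN p W1 v1 N x l|
          + |W2 N j l * (hiddenNN p W1 v1 N x l - hiddenNN p W2 v2 N x l)| := abs_add_le _ _
      _ ≤ ε * Bb p N + 1 * D := by
          gcongr
          · rw [abs_mul]
            exact mul_le_mul (hWd N le_rfl j l) (h1B l) (abs_nonneg _) hε
          · rw [abs_mul]
            exact mul_le_mul (hW2 N le_rfl j l) (hdiff l) (abs_nonneg _) zero_le_one
      _ = ε * Bb p N + D := by ring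
  have hT : (1:ℝ) ≤ (2:ℝ) ^ N := one_le_pow₀ (by norm_num)
  have hmid : (p N : ℝ) * (ε * Bb p N + D)
      ≤ ε * ((N:ℝ) + 1) * 2 ^ N * (((p N : ℝ) + 1) * Bb p N) := by
    rw [hD]
    nlinarith [mul_nonneg hε hBnn, mul_nonneg (mul_nonneg hε hBnn) hp0,
      mul_nonneg (mul_nonneg (mul_nonneg hε hBnn) hp0) (sub_nonneg.2 hT),
      mul_nonneg (mul_nonneg hε hBnn) (sub_nonneg.2 hT),
      mul_nonneg (mul_nonneg (mul_nonneg hε hBnn) (Nat.cast_nonneg N : (0:ℝ) ≤ (N:ℝ))) (sub_nonneg.2 hT)]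
  have hprod : ((p N : ℝ) + 1) * Bb p N
      ≤ ∏ l ∈ Finset.range (N + 1), ((p l : ℝ) + 1) ^ (2 ^ N) := by
    have h1 : ((p N : ℝ) + 1) ≤ ((p N : ℝ) + 1) ^ (2 ^ N) :=
      le_self_pow₀ (le_add_of_nonneg_left (Nat.cast_nonneg _)) (Nat.two_pow_pos N).ne'
    have h2 : Bb p N ≤ ∏ l ∈ Finset.range N, ((p l : ℝ) + 1) ^ (2 ^ N) := Bb_le_prod p N
    calc ((p N : ℝ) + 1) * Bb p N
        ≤ ((p N : ℝ) + 1) ^ (2 ^ N) * ∏ l ∈ Finset.range N, ((p l : ℝ) + 1) ^ (2 ^ N) :=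
          mul_le_mul h1 h2 hBnn (by positivity)
      _ = ∏ l ∈ Finset.range (N + 1), ((p l : ℝ) + 1) ^ (2 ^ N) := by
          rw [Finset.prod_range_succ]; ring
  calc |evalNN p W1 v1 N x j - evalNN p W2 v2 N x j|
      ≤ (p N : ℝ) * (ε * Bb p N + D) := hsum
    _ ≤ ε * ((N:ℝ) + 1) * 2 ^ N * (((p N : ℝ) + 1) * Bb p N) := hmid
    _ ≤ ε * ((N:ℝ) + 1) * 2 ^ N * ∏ l ∈ Finset.range (N + 1), ((p l : ℝ) + 1) ^ (2 ^ N) := by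
        have : (0:ℝ) ≤ ε * ((N:ℝ) + 1) * 2 ^ N := by positivity
        exact mul_le_mul_of_nonneg_left hprod this
end

section
/- For every a ∈ (0,1), letting C_a = 1 + sqrt( min{ a / ((1 − a) log(1/(1 − a))), (1 − a) / (a log(1/a)) } ), the function h_a(v) = (a + v) log(1 + v/a) + (1 − a − v) log(1 − v/(1 − a)) satisfies h_a(v) ≤ C_a² v² / ( (C_a − 1)² a (1 − a) ) for all v ∈ [−a, 1 − a] (with the convention 0·log 0 = 0 at the endpoints). -/
lemma xlog_aux (x c : ℝ) (hx : 0 ≤ x) (hc : 0 < c) :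
    x * Real.log (x / c) ≤ x * (x - c) / c := by
  rcases eq_or_lt_of_le hx with h | h
  · simp [← h]
  · have hlog : Real.log (x / c) ≤ x / c - 1 :=
      Real.log_le_sub_one_of_pos (div_pos h hc)
    calc x * Real.log (x / c) ≤ x * (x / c - 1) := by nlinarith
      _ = x * (x - c) / c := by field_simp

/-- For every `a ∈ (0,1)`, with
`C_a = 1 + sqrt( min{ a / ((1-a) log(1/(1-a))), (1-a) / (a log(1/a)) } )`,
the function `h_a(v) = (a+v) log(1 + v/a) + (1-a-v) log(1 - v/(1-a))` satisfies
`h_a(v) ≤ C_a² v² / ((C_a - 1)² a (1-a))` on `[-a, 1-a]`.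
(In Lean, `Real.log 0 = 0`, implementing the convention `0 · log 0 = 0`.) -/
theorem statement_17 (a : ℝ) (ha : a ∈ Set.Ioo (0 : ℝ) 1)
    (v : ℝ) (hv : v ∈ Set.Icc (-a) (1 - a)) :
    let Ca : ℝ := 1 + Real.sqrt (min (a / ((1 - a) * Real.log (1 / (1 - a))))
      ((1 - a) / (a * Real.log (1 / a))))
    (a + v) * Real.log (1 + v / a) + (1 - a - v) * Real.log (1 - v / (1 - a)) ≤
      Ca ^ 2 * v ^ 2 / ((Ca - 1) ^ 2 * a * (1 - a)) := by
  obtain ⟨ha0, ha1⟩ := ha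
  obtain ⟨hv1, hv2⟩ := hv
  have ha1' : 0 < 1 - a := by linarith
  intro Ca
  -- step 1: h ≤ v² / (a (1-a))
  have e1 : 1 + v / a = (a + v) / a := by field_simp
  have e2 : 1 - v / (1 - a) = (1 - a - v) / (1 - a) := by field_simp
  have h1 : (a + v) * Real.log (1 + v / a) ≤ (a + v) * (a + v - a) / a := by
    rw [e1]; exact xlog_aux _ _ (by linarith) ha0
  have h2 : (1 - a - v) * Real.log (1 - v / (1 - a)) ≤
      (1 - a - v) * (1 - a - v - (1 - a)) / (1 - a) := by
    rw [e2]; exact xlog_aux _ _ (by linarith) ha1'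
  have hsum : (a + v) * Real.log (1 + v / a) + (1 - a - v) * Real.log (1 - v / (1 - a)) ≤
      v ^ 2 / (a * (1 - a)) := by
    have heq : (a + v) * (a + v - a) / a + (1 - a - v) * (1 - a - v - (1 - a)) / (1 - a)
        = v ^ 2 / (a * (1 - a)) := by
      field_simp; ring
    linarith
  -- step 2: m > 0
  have hl1 : 0 < Real.log (1 / (1 - a)) := by
    apply Real.log_pos
    rw [lt_div_iff₀ ha1']; linarith
  have hl2 : 0 < Real.log (1 / a) := by
    apply Real.log_pos
    rw [lt_div_iff₀ ha0]; linarith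
  have hm : 0 < min (a / ((1 - a) * Real.log (1 / (1 - a))))
      ((1 - a) / (a * Real.log (1 / a))) := by
    apply lt_min <;> positivity
  set m := min (a / ((1 - a) * Real.log (1 / (1 - a)))) ((1 - a) / (a * Real.log (1 / a)))
  have hs : 0 < Real.sqrt m := Real.sqrt_pos.mpr hm
  have hCa : Ca - 1 = Real.sqrt m := by show 1 + Real.sqrt m - 1 = Real.sqrt m; ring
  -- step 3: v²/(a(1-a)) ≤ RHS
  have hfin : v ^ 2 / (a * (1 - a)) ≤ Ca ^ 2 * v ^ 2 / ((Ca - 1) ^ 2 * a * (1 - a)) := by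
    rw [hCa]
    have hCpos : (0:ℝ) < 1 + Real.sqrt m := by positivity
    have hCeq : Ca = 1 + Real.sqrt m := rfl
    have hsq : Real.sqrt m ^ 2 ≤ Ca ^ 2 := by nlinarith
    rw [div_le_div_iff₀ (by positivity) (by positivity)]
    nlinarith [hsq, mul_nonneg (sq_nonneg v) (mul_pos ha0 ha1').le]
  linarith
end

section
/- The function h(u) = (1 + u) log(1 + u) + (1 − u) log(1 − u) satisfies u² ≤ h(u) ≤ (2 log 2) u² for all u ∈ [−1, 1] (with the convention 0·log 0 = 0 at u = ±1). Equivalently, the map u ↦ h(u)/u² is even, increasing on (0,1], has limit 1 at 0, and attains its maximum 2 log 2 at u = ±1. -/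
open Real Set Filter


/-- The scalar function `h(u) = (1+u) log(1+u) + (1-u) log(1-u)`. In Lean,
`Real.log 0 = 0`, which implements the convention `0 · log 0 = 0` at `u = ±1`. -/
noncomputable def hJS (u : ℝ) : ℝ :=
  (1 + u) * Real.log (1 + u) + (1 - u) * Real.log (1 - u)


lemma continuous_hJS : Continuous hJS := by
  have h1 : Continuous fun u : ℝ => (1 + u) * Real.log (1 + u) :=
    Real.continuous_mul_log.comp (by continuity)
  have h2 : Continuous fun u : ℝ => (1 - u) * Real.log (1 - u) :=
    Real.continuous_mul_log.comp (by continuity)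
  exact h1.add h2

lemma hJS_even (u : ℝ) : hJS (-u) = hJS u := by
  unfold hJS; ring_nf

lemma hJS_one : hJS 1 = 2 * Real.log 2 := by
  unfold hJS; norm_num

lemma hJS_zero : hJS 0 = 0 := by
  unfold hJS; norm_num

lemma hasDerivAt_hJS {u : ℝ} (h1 : -1 < u) (h2 : u < 1) :
    HasDerivAt hJS (Real.log (1 + u) - Real.log (1 - u)) u := by
  have p1 : (0:ℝ) < 1 + u := by linarith
  have p2 : (0:ℝ) < 1 - u := by linarith
  have a1 : HasDerivAt (fun u : ℝ => 1 + u) 1 u := by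
    simpa using (hasDerivAt_id u).const_add (1:ℝ)
  have a2 : HasDerivAt (fun u : ℝ => 1 - u) (-1) u := by
    simpa using (hasDerivAt_id u).const_sub (1:ℝ)
  have d1 : HasDerivAt (fun u : ℝ => (1 + u) * Real.log (1 + u))
      ((Real.log (1 + u) + 1) * 1) u :=
    (Real.hasDerivAt_mul_log p1.ne').comp u a1
  have d2 : HasDerivAt (fun u : ℝ => (1 - u) * Real.log (1 - u))
      ((Real.log (1 - u) + 1) * (-1)) u :=
    (Real.hasDerivAt_mul_log p2.ne').comp u a2
  have := d1.add d2
  exact this.congr_deriv (by ring)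

lemma hasDerivAt_log1p {u : ℝ} (h1 : -1 < u) :
    HasDerivAt (fun u : ℝ => Real.log (1 + u)) ((1 + u)⁻¹) u := by
  have p1 : (0:ℝ) < 1 + u := by linarith
  have a1 : HasDerivAt (fun u : ℝ => 1 + u) 1 u := by
    simpa using (hasDerivAt_id u).const_add (1:ℝ)
  exact ((Real.hasDerivAt_log p1.ne').comp u a1).congr_deriv (by simp)

lemma hasDerivAt_log1m {u : ℝ} (h2 : u < 1) :
    HasDerivAt (fun u : ℝ => Real.log (1 - u)) (-(1 - u)⁻¹) u := by
  have p2 : (0:ℝ) < 1 - u := by linarith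
  have a2 : HasDerivAt (fun u : ℝ => 1 - u) (-1) u := by
    simpa using (hasDerivAt_id u).const_sub (1:ℝ)
  have := (Real.hasDerivAt_log p2.ne').comp u a2
  exact this.congr_deriv (by ring)

lemma nonneg_of_deriv_aux {F F' : ℝ → ℝ} {s : Set ℝ}
    (hs : Convex ℝ s) (h0 : (0:ℝ) ∈ s)
    (hc : ContinuousOn F s)
    (hd : ∀ u ∈ interior s, HasDerivAt F (F' u) u)
    (hnn : ∀ u ∈ interior s, 0 ≤ F' u)
    (hF0 : F 0 = 0) : ∀ u ∈ s, 0 ≤ u → 0 ≤ F u := by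
  have mono : MonotoneOn F s := monotoneOn_of_deriv_nonneg hs hc
    (fun u hu => (hd u hu).differentiableAt.differentiableWithinAt)
    (fun u hu => by rw [(hd u hu).deriv]; exact hnn u hu)
  intro u hu hu0
  calc (0:ℝ) = F 0 := hF0.symm
  _ ≤ F u := mono h0 hu hu0

lemma nonneg_Ico {F F' : ℝ → ℝ}
    (hd : ∀ u ∈ Ico (0:ℝ) 1, HasDerivAt F (F' u) u)
    (hnn : ∀ u ∈ Ioo (0:ℝ) 1, 0 ≤ F' u)
    (hF0 : F 0 = 0) : ∀ u ∈ Ico (0:ℝ) 1, 0 ≤ F u := by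
  have := nonneg_of_deriv_aux (F := F) (F' := F') (s := Ico (0:ℝ) 1)
    (convex_Ico _ _) (by norm_num)
    (fun u hu => (hd u hu).continuousAt.continuousWithinAt)
    (fun u hu => hd u (by rw [interior_Ico] at hu; exact ⟨hu.1.le, hu.2⟩))
    (fun u hu => hnn u (by rwa [interior_Ico] at hu)) hF0
  exact fun u hu => this u hu hu.1

/-- L1: `log(1+u) - log(1-u) - 2u ≥ 0` on `[0,1)`. -/
lemma L1 : ∀ u ∈ Ico (0:ℝ) 1, 0 ≤ Real.log (1 + u) - Real.log (1 - u) - 2 * u := by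
  apply nonneg_Ico (F' := fun u => (1 + u)⁻¹ + (1 - u)⁻¹ - 2)
  · intro u hu
    have h1 : (-1:ℝ) < u := by linarith [hu.1]
    have := ((hasDerivAt_log1p h1).sub (hasDerivAt_log1m hu.2)).sub
      ((hasDerivAt_id u).const_mul (2:ℝ))
    exact this.congr_deriv (by ring)
  · intro u hu
    have p1 : (0:ℝ) < 1 + u := by linarith [hu.1]
    have p2 : (0:ℝ) < 1 - u := by linarith [hu.2]
    rw [sub_nonneg]
    have hne : (1 - u^2) ≠ 0 := by nlinarith
    have h : (1+u)⁻¹ + (1-u)⁻¹ = 2 / (1 - u^2) := by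
      rw [eq_div_iff hne]
      field_simp
      ring
    rw [h, le_div_iff₀ (by nlinarith)]
    nlinarith
  · norm_num

/-- Lower bound: `u^2 ≤ hJS u` on `[0,1]`. -/
lemma lower_Icc : ∀ u ∈ Icc (0:ℝ) 1, u ^ 2 ≤ hJS u := by
  have key := nonneg_of_deriv_aux (F := fun u => hJS u - u ^ 2)
    (F' := fun u => Real.log (1 + u) - Real.log (1 - u) - 2 * u)
    (s := Icc (0:ℝ) 1) (convex_Icc _ _) (by norm_num)
    ((continuous_hJS.sub (continuous_pow 2)).continuousOn)
    ?_ ?_ (by simp [hJS_zero])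
  · intro u hu
    have := key u hu hu.1
    linarith
  · intro u hu
    rw [interior_Icc] at hu
    have h1 : (-1:ℝ) < u := by linarith [hu.1]
    have := (hasDerivAt_hJS h1 hu.2).sub (hasDerivAt_pow 2 u)
    exact this.congr_deriv (by ring)
  · intro u hu
    rw [interior_Icc] at hu
    exact L1 u ⟨hu.1.le, hu.2⟩

/-- L3: `ψ(u) = 2u/(1-u²) - (log(1+u) - log(1-u)) ≥ 0` on `[0,1)`. -/
lemma L3 : ∀ u ∈ Ico (0:ℝ) 1,
    0 ≤ 2 * u / (1 - u ^ 2) - (Real.log (1 + u) - Real.log (1 - u)) := by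
  apply nonneg_Ico (F' := fun u => (2 + 2 * u ^ 2) / (1 - u ^ 2) ^ 2 - ((1 + u)⁻¹ + (1 - u)⁻¹))
  · intro u hu
    obtain ⟨hl, hr⟩ := hu
    have h1 : (-1:ℝ) < u := by linarith
    have p1 : (0:ℝ) < 1 + u := by linarith
    have p2 : (0:ℝ) < 1 - u := by linarith
    have hq : (0:ℝ) < 1 - u ^ 2 := by nlinarith
    have dq := ((hasDerivAt_id u).const_mul (2:ℝ)).div
      ((hasDerivAt_pow 2 u).const_sub 1) hq.ne'
    have := dq.sub ((hasDerivAt_log1p h1).sub (hasDerivAt_log1m hr))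
    exact this.congr_deriv (by simp only [id, Pi.pow_apply, Pi.sub_apply]; field_simp; ring)
  · intro u hu
    obtain ⟨hl, hr⟩ := hu
    have p1 : (0:ℝ) < 1 + u := by linarith
    have p2 : (0:ℝ) < 1 - u := by linarith
    have hq : (0:ℝ) < 1 - u ^ 2 := by nlinarith
    have h : (1 + u)⁻¹ + (1 - u)⁻¹ = 2 / (1 - u ^ 2) := by
      rw [eq_div_iff hq.ne']
      field_simp
      ring
    rw [sub_nonneg, h, div_le_div_iff₀ hq (by positivity)]
    nlinarith [mul_nonneg hq.le (sq_nonneg u)]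
  · norm_num

/-- L4: `φ(u) = u·h'(u) - 2 h(u) ≥ 0` on `[0,1)`. -/
lemma L4 : ∀ u ∈ Ico (0:ℝ) 1,
    0 ≤ u * (Real.log (1 + u) - Real.log (1 - u)) - 2 * hJS u := by
  apply nonneg_Ico (F' := fun u => 2 * u / (1 - u ^ 2) - (Real.log (1 + u) - Real.log (1 - u)))
  · intro u hu
    obtain ⟨hl, hr⟩ := hu
    have h1 : (-1:ℝ) < u := by linarith
    have p1 : (0:ℝ) < 1 + u := by linarith
    have p2 : (0:ℝ) < 1 - u := by linarith
    have hq : (0:ℝ) < 1 - u ^ 2 := by nlinarith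
    have dprod := (hasDerivAt_id u).mul ((hasDerivAt_log1p h1).sub (hasDerivAt_log1m hr))
    have := dprod.sub ((hasDerivAt_hJS h1 hr).const_mul 2)
    exact this.congr_deriv (by simp only [id, Pi.pow_apply, Pi.sub_apply]; field_simp [hq.ne']; ring)
  · intro u hu
    exact L3 u ⟨hu.1.le, hu.2⟩
  · simp [hJS_zero]

/-- L6a: `2u/(1-u²)² - (log(1+u) - log(1-u)) ≥ 0` on `[0,1)`. -/
lemma L6a : ∀ u ∈ Ico (0:ℝ) 1,
    0 ≤ 2 * u / (1 - u ^ 2) ^ 2 - (Real.log (1 + u) - Real.log (1 - u)) := by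
  apply nonneg_Ico
    (F' := fun u => (2 + 6 * u ^ 2) / (1 - u ^ 2) ^ 3 - ((1 + u)⁻¹ + (1 - u)⁻¹))
  · intro u hu
    obtain ⟨hl, hr⟩ := hu
    have h1 : (-1:ℝ) < u := by linarith
    have p1 : (0:ℝ) < 1 + u := by linarith
    have p2 : (0:ℝ) < 1 - u := by linarith
    have hq : (0:ℝ) < 1 - u ^ 2 := by nlinarith
    have dden := ((hasDerivAt_pow 2 u).const_sub 1).pow 2
    have dq := ((hasDerivAt_id u).const_mul (2:ℝ)).div dden (pow_ne_zero 2 hq.ne')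
    have := dq.sub ((hasDerivAt_log1p h1).sub (hasDerivAt_log1m hr))
    exact this.congr_deriv (by simp only [id, Pi.pow_apply, Pi.sub_apply]; field_simp; ring)
  · intro u hu
    obtain ⟨hl, hr⟩ := hu
    have p1 : (0:ℝ) < 1 + u := by linarith
    have p2 : (0:ℝ) < 1 - u := by linarith
    have hq : (0:ℝ) < 1 - u ^ 2 := by nlinarith
    have h : (1 + u)⁻¹ + (1 - u)⁻¹ = 2 / (1 - u ^ 2) := by
      rw [eq_div_iff hq.ne']
      field_simp
      ring
    rw [sub_nonneg, h, div_le_div_iff₀ hq (by positivity)]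
    nlinarith [mul_nonneg (mul_nonneg hq.le (sq_nonneg u))
      (by nlinarith : (0:ℝ) ≤ 10 - 2 * u ^ 2)]
  · norm_num

/-- L6b: `hJS u ≤ u²/(1-u²)` on `[0,1)`. -/
lemma L6b : ∀ u ∈ Ico (0:ℝ) 1, hJS u ≤ u ^ 2 / (1 - u ^ 2) := by
  have key := nonneg_Ico (F := fun u => u ^ 2 / (1 - u ^ 2) - hJS u)
    (F' := fun u => 2 * u / (1 - u ^ 2) ^ 2 - (Real.log (1 + u) - Real.log (1 - u)))
    ?_ ?_ ?_
  · intro u hu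
    have := key u hu
    linarith
  · intro u hu
    obtain ⟨hl, hr⟩ := hu
    have h1 : (-1:ℝ) < u := by linarith
    have p1 : (0:ℝ) < 1 + u := by linarith
    have p2 : (0:ℝ) < 1 - u := by linarith
    have hq : (0:ℝ) < 1 - u ^ 2 := by nlinarith
    have dq := (hasDerivAt_pow 2 u).div ((hasDerivAt_pow 2 u).const_sub 1) hq.ne'
    have := dq.sub (hasDerivAt_hJS h1 hr)
    exact this.congr_deriv (by field_simp; ring)
  · intro u hu
    exact L6a u ⟨hu.1.le, hu.2⟩
  · simp [hJS_zero]

lemma monoJS : MonotoneOn (fun u => hJS u / u ^ 2) (Ioc (0:ℝ) 1) := by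
  apply monotoneOn_of_deriv_nonneg (convex_Ioc _ _)
  · exact (continuous_hJS.continuousOn).div ((continuous_pow 2).continuousOn)
      (fun u hu => pow_ne_zero 2 (ne_of_gt hu.1))
  · rw [interior_Ioc]
    intro u hu
    have h1 : (-1:ℝ) < u := by linarith [hu.1]
    exact (((hasDerivAt_hJS h1 hu.2).div (hasDerivAt_pow 2 u)
      (pow_ne_zero 2 hu.1.ne'))).differentiableAt.differentiableWithinAt
  · intro u hu
    rw [interior_Ioc] at hu
    have h1 : (-1:ℝ) < u := by linarith [hu.1]
    have hd := (hasDerivAt_hJS h1 hu.2).div (hasDerivAt_pow 2 u) (pow_ne_zero 2 hu.1.ne')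
    rw [show (fun u => hJS u / u ^ 2) = hJS / fun x => x ^ 2 from rfl, hd.deriv]
    apply div_nonneg _ (by positivity)
    have hphi := L4 u ⟨hu.1.le, hu.2⟩
    have expand : (Real.log (1 + u) - Real.log (1 - u)) * u ^ 2 - hJS u * ((2:ℕ) * u ^ 1)
        = u * (u * (Real.log (1 + u) - Real.log (1 - u)) - 2 * hJS u) := by
      push_cast
      ring
    rw [expand]
    exact mul_nonneg hu.1.le hphi

lemma tendstoJS :
    Tendsto (fun u => hJS u / u ^ 2) (nhdsWithin 0 {(0:ℝ)}ᶜ) (nhds 1) := by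
  have hmem : ∀ᶠ u in nhdsWithin 0 {(0:ℝ)}ᶜ, u ∈ Ioo (-1:ℝ) 1 :=
    eventually_nhdsWithin_of_eventually_nhds
      (eventually_of_mem (Ioo_mem_nhds (by norm_num) (by norm_num)) (fun x hx => hx))
  have hne : ∀ᶠ u in nhdsWithin 0 {(0:ℝ)}ᶜ, u ≠ 0 :=
    eventually_mem_nhdsWithin.mono (fun x hx => hx)
  refine tendsto_of_tendsto_of_tendsto_of_le_of_le' (g := fun _ => (1:ℝ))
    (h := fun u => (1 - u ^ 2)⁻¹) tendsto_const_nhds ?_ ?_ ?_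
  · have hc : ContinuousAt (fun u : ℝ => (1 - u ^ 2)⁻¹) 0 :=
      ((continuous_const.sub (continuous_pow 2)).continuousAt).inv₀ (by norm_num)
    have h2 : Tendsto (fun u : ℝ => (1 - u ^ 2)⁻¹) (nhdsWithin 0 {(0:ℝ)}ᶜ)
        (nhds ((1 - (0:ℝ) ^ 2)⁻¹)) := hc.tendsto.mono_left nhdsWithin_le_nhds
    simpa using h2
  · filter_upwards [hmem, hne] with u hu hu0
    have hpos : (0:ℝ) < u ^ 2 := pow_two_pos_of_ne_zero hu0
    have hlow : u ^ 2 ≤ hJS u := by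
      rcases le_or_gt 0 u with h | h
      · exact lower_Icc u ⟨h, hu.2.le⟩
      · have := lower_Icc (-u) ⟨by linarith, by linarith [hu.1]⟩
        rw [hJS_even] at this
        have h2 : (-u) ^ 2 = u ^ 2 := by ring
        rwa [h2] at this
    rw [le_div_iff₀ hpos]
    linarith
  · filter_upwards [hmem, hne] with u hu hu0
    have hpos : (0:ℝ) < u ^ 2 := pow_two_pos_of_ne_zero hu0
    have hq : (0:ℝ) < 1 - u ^ 2 := by nlinarith [hu.1, hu.2]
    have hupper : hJS u ≤ u ^ 2 / (1 - u ^ 2) := by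
      rcases le_or_gt 0 u with h | h
      · exact L6b u ⟨h, hu.2⟩
      · have := L6b (-u) ⟨by linarith, by linarith [hu.1]⟩
        rw [hJS_even] at this
        have h2 : (-u) ^ 2 = u ^ 2 := by ring
        rwa [h2] at this
    have heq : (u ^ 2 / (1 - u ^ 2)) / u ^ 2 = (1 - u ^ 2)⁻¹ := by
      field_simp
    have step : hJS u / u ^ 2 ≤ (u ^ 2 / (1 - u ^ 2)) / u ^ 2 := by
      gcongr
    rw [heq] at step
    exact step


/-- `u² ≤ h(u) ≤ (2 log 2) u²` on `[-1,1]`; moreover `u ↦ h(u)/u²` is even,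
increasing on `(0,1]`, tends to `1` at `0`, and attains the value `2 log 2` at `u = 1`
(hence at `u = -1` by evenness). -/
theorem statement_18 :
    (∀ u : ℝ, u ∈ Set.Icc (-1 : ℝ) 1 →
      u ^ 2 ≤ hJS u ∧ hJS u ≤ 2 * Real.log 2 * u ^ 2) ∧
    (∀ u : ℝ, hJS (-u) = hJS u) ∧
    MonotoneOn (fun u => hJS u / u ^ 2) (Set.Ioc (0 : ℝ) 1) ∧
    Filter.Tendsto (fun u => hJS u / u ^ 2) (nhdsWithin 0 {(0 : ℝ)}ᶜ) (nhds 1) ∧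
    hJS 1 = 2 * Real.log 2 := by
  have main : ∀ t ∈ Icc (0:ℝ) 1, t ^ 2 ≤ hJS t ∧ hJS t ≤ 2 * Real.log 2 * t ^ 2 := by
    intro t ht
    refine ⟨lower_Icc t ht, ?_⟩
    rcases eq_or_lt_of_le ht.1 with h | h
    · rw [← h]
      simp [hJS_zero]
    · have hm := monoJS ⟨h, ht.2⟩ ⟨zero_lt_one, le_refl 1⟩ ht.2
      simp only [hJS_one, one_pow, div_one] at hm
      rw [div_le_iff₀ (pow_pos h 2)] at hm
      linarith
  refine ⟨?_, hJS_even, monoJS, tendstoJS, hJS_one⟩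
  intro u hu
  rcases le_or_gt 0 u with h | h
  · exact main u ⟨h, hu.2⟩
  · have := main (-u) ⟨by linarith, by linarith [hu.1]⟩
    rw [hJS_even] at this
    have h2 : (-u) ^ 2 = u ^ 2 := by ring
    rwa [h2] at this
end
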